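/- arXiv:2106.02759 — 5 statements merged into one kernel-verified Lean document; each statement's English description precedes it below -/
import Mathlib

section
/- Let X be a finite set of distinct points in ℙ¹ × ℙ¹ over a field k. Then for all i ≥ |π₁(X)| − 1 and all j ≥ 0, the Hilbert function of S/I_X satisfies H_{S/I_X}(i,j) = Σ_{A ∈ π₁(X)} min(α_A, j+1) (equivalently, H_{S/I_X}(i,j) = α₁* + ⋯ + α*_{j+1}, where α*_t = #{A ∈ π₁(X) : α_A ≥ t}). -/
open MvPolynomial
open scoped Classical

noncomputable section

/-- `ℙ¹` over `k`, as the projectivization of `k²`. A `Finset` of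
`P1 k × P1 k` is a finite set of distinct points in `ℙ¹ × ℙ¹`. -/
abbrev P1 (k : Type) [Field k] := Projectivization k (Fin 2 → k)

variable (k : Type) [Field k]

/-- The linear form `a₁x₀ - a₀x₁` of degree `(1,0)` vanishing at `A = [a₀:a₁]`. -/
def lX (A : P1 k) : MvPolynomial (Fin 4) k :=
  C (A.rep 1) * X 0 - C (A.rep 0) * X 1

/-- The linear form `b₁y₀ - b₀y₁` of degree `(0,1)` vanishing at `B = [b₀:b₁]`. -/
def lY (B : P1 k) : MvPolynomial (Fin 4) k :=
  C (B.rep 1) * X 2 - C (B.rep 0) * X 3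

/-- The defining ideal `I_P = ⟨a₁x₀ - a₀x₁, b₁y₀ - b₀y₁⟩` of a point
`P = [a₀:a₁] × [b₀:b₁]` of `ℙ¹ × ℙ¹`. Here `x₀,x₁,y₀,y₁` are `X 0, X 1, X 2, X 3`. -/
def pointIdeal (P : P1 k × P1 k) : Ideal (MvPolynomial (Fin 4) k) :=
  Ideal.span {lX k P.1, lY k P.2}

/-- The defining ideal `I_X = ⋂_{P ∈ X} I_P` of a finite set of points of `ℙ¹ × ℙ¹`. -/
def IX (Xs : Finset (P1 k × P1 k)) : Ideal (MvPolynomial (Fin 4) k) :=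
  ⨅ P ∈ Xs, pointIdeal k P

/-- The irrelevant ideal `B = ⟨x₀y₀, x₀y₁, x₁y₀, x₁y₁⟩`. -/
def Birr : Ideal (MvPolynomial (Fin 4) k) :=
  Ideal.span {X 0 * X 2, X 0 * X 3, X 1 * X 2, X 1 * X 3}

/-- The ideal `⟨x₀, x₁⟩`. -/
def Mx : Ideal (MvPolynomial (Fin 4) k) := Ideal.span {X 0, X 1}

/-- The bidegree-`(i,j)` component `S_{(i,j)}` of `S = k[x₀,x₁,y₀,y₁]`: the `k`-span of
monomials of degree `i` in `x₀,x₁` and degree `j` in `y₀,y₁`. -/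
def bicomp (i j : ℕ) : Submodule k (MvPolynomial (Fin 4) k) :=
  Submodule.span k {f | ∃ m : Fin 4 →₀ ℕ, m 0 + m 1 = i ∧ m 2 + m 3 = j ∧ f = monomial m 1}

/-- The Hilbert function `H_{S/I}(i,j) = dim_k S_{(i,j)} - dim_k (I ∩ S_{(i,j)})`. -/
def hilb (I : Ideal (MvPolynomial (Fin 4) k)) (i j : ℕ) : ℤ :=
  (Module.finrank k (bicomp k i j) : ℤ) -
    (Module.finrank k
      ((Submodule.restrictScalars k I) ⊓ bicomp k i j : Submodule k (MvPolynomial (Fin 4) k)) : ℤ)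

/-- `π₁(X)`, the set of distinct first coordinates of points of `X`. -/
def pi1 (Xs : Finset (P1 k × P1 k)) : Finset (P1 k) := Xs.image Prod.fst

/-- `α_A`, the number of points of `X` whose first coordinate is `A`. -/
def alphaA (Xs : Finset (P1 k × P1 k)) (A : P1 k) : ℕ :=
  (Xs.filter (fun P => P.1 = A)).card

/-- The point `[0:1]` of `ℙ¹`. -/
def pt01 : P1 k := Projectivization.mk k ![0, 1] (by
  intro h
  have := congrFun h 1
  simp at this)


namespace Stmt4Aux

variable {k : Type} [Field k]

lemma vec_cases {u : Fin 2 → k} (hu : u ≠ 0) : u 0 ≠ 0 ∨ u 1 ≠ 0 := by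
  by_contra h
  push_neg at h
  apply hu; funext t; fin_cases t <;> simp [h.1, h.2]

lemma P1.eq_iff (A B : P1 k) : A = B ↔ A.rep 1 * B.rep 0 - A.rep 0 * B.rep 1 = 0 := by
  constructor
  · rintro rfl; ring
  · intro h
    have hA := A.rep_nonzero
    have hB := B.rep_nonzero
    rw [← A.mk_rep, ← B.mk_rep, Projectivization.mk_eq_mk_iff]
    rw [sub_eq_zero] at h
    rcases vec_cases hB with h0 | h0
    · have ha0 : A.rep 0 ≠ 0 := by
        intro hz
        have hz2 : A.rep 1 * B.rep 0 = 0 := by rw [h, hz, zero_mul]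
        have h1 : A.rep 1 = 0 := by
          rcases mul_eq_zero.1 hz2 with h' | h'
          · exact h'
          · exact absurd h' h0
        exact hA (funext fun t => by fin_cases t <;> simp [hz, h1])
      refine ⟨Units.mk0 (A.rep 0 / B.rep 0) (div_ne_zero ha0 h0), ?_⟩
      funext t
      fin_cases t
      · simp only [Units.smul_def, Units.val_mk0, Pi.smul_apply, smul_eq_mul]
        exact div_mul_cancel₀ _ h0
      · simp only [Units.smul_def, Units.val_mk0, Pi.smul_apply, smul_eq_mul]
        field_simp
        simp only [Fin.mk_one, Fin.zero_eta]
        linear_combination -h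
    · have ha1 : A.rep 1 ≠ 0 := by
        intro hz
        have hz2 : A.rep 0 * B.rep 1 = 0 := by rw [← h, hz, zero_mul]
        have h1 : A.rep 0 = 0 := by
          rcases mul_eq_zero.1 hz2 with h' | h'
          · exact h'
          · exact absurd h' h0
        exact hA (funext fun t => by fin_cases t <;> simp [hz, h1])
      refine ⟨Units.mk0 (A.rep 1 / B.rep 1) (div_ne_zero ha1 h0), ?_⟩
      funext t
      fin_cases t
      · simp only [Units.smul_def, Units.val_mk0, Pi.smul_apply, smul_eq_mul]
        field_simp
        simp only [Fin.mk_one, Fin.zero_eta]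
        linear_combination h
      · simp only [Units.smul_def, Units.val_mk0, Pi.smul_apply, smul_eq_mul]
        exact div_mul_cancel₀ _ h0

end Stmt4Aux
section C2
namespace Stmt4Aux

variable {k : Type} [Field k]

/-- the representative coordinate vector of a point of `ℙ¹ × ℙ¹`. -/
def rv (P : P1 k × P1 k) : Fin 4 → k := ![P.1.rep 0, P.1.rep 1, P.2.rep 0, P.2.rep 1]

@[simp] lemma rv0 (P : P1 k × P1 k) : rv P 0 = P.1.rep 0 := rfl
@[simp] lemma rv1 (P : P1 k × P1 k) : rv P 1 = P.1.rep 1 := rfl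
@[simp] lemma rv2 (P : P1 k × P1 k) : rv P 2 = P.2.rep 0 := rfl
@[simp] lemma rv3 (P : P1 k × P1 k) : rv P 3 = P.2.rep 1 := rfl

lemma eval_lX (P : P1 k × P1 k) (A' : P1 k) :
    eval (rv P) (lX k A') = A'.rep 1 * P.1.rep 0 - A'.rep 0 * P.1.rep 1 := by
  simp [lX]

lemma eval_lY (P : P1 k × P1 k) (B' : P1 k) :
    eval (rv P) (lY k B') = B'.rep 1 * P.2.rep 0 - B'.rep 0 * P.2.rep 1 := by
  simp [lY]

lemma eval_lX_eq_zero_iff (P : P1 k × P1 k) (A' : P1 k) :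
    eval (rv P) (lX k A') = 0 ↔ A' = P.1 := by
  rw [eval_lX, ← P1.eq_iff]

lemma eval_lY_eq_zero_iff (P : P1 k × P1 k) (B' : P1 k) :
    eval (rv P) (lY k B') = 0 ↔ B' = P.2 := by
  rw [eval_lY, ← P1.eq_iff]

lemma eval_eq_zero_of_mem {P : P1 k × P1 k} {f : MvPolynomial (Fin 4) k}
    (hf : f ∈ pointIdeal k P) : eval (rv P) f = 0 := by
  rw [pointIdeal, Ideal.mem_span_pair] at hf
  obtain ⟨p, q, rfl⟩ := hf
  have h1 : eval (rv P) (lX k P.1) = 0 := by rw [eval_lX_eq_zero_iff]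
  have h2 : eval (rv P) (lY k P.2) = 0 := by rw [eval_lY_eq_zero_iff]
  simp [h1, h2]

lemma pow_sub_mem {I : Ideal (MvPolynomial (Fin 4) k)} {s t : Fin 4} {u v : k} (hv : v ≠ 0)
    (hg : C v * X s - C u * X t ∈ I) (n0 n1 : ℕ) :
    X s ^ n0 * X t ^ n1 - C ((u / v) ^ n0) * X t ^ (n0 + n1) ∈ I := by
  have h1 : (X s : MvPolynomial (Fin 4) k) - C (u / v) * X t ∈ I := by
    have he : (X s : MvPolynomial (Fin 4) k) - C (u / v) * X t
        = C v⁻¹ * (C v * X s - C u * X t) := by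
      have h2 : (C (u / v) : MvPolynomial (Fin 4) k) = C v⁻¹ * C u := by
        rw [← C_mul]; congr 1; field_simp
      have h3 : (1 : MvPolynomial (Fin 4) k) = C v⁻¹ * C v := by
        rw [← C_mul, inv_mul_cancel₀ hv, C_1]
      rw [h2]
      calc (X s : MvPolynomial (Fin 4) k) - C v⁻¹ * C u * X t
          = 1 * X s - C v⁻¹ * C u * X t := by ring
        _ = C v⁻¹ * C v * X s - C v⁻¹ * C u * X t := by rw [← h3]
        _ = C v⁻¹ * (C v * X s - C u * X t) := by ring
    rw [he]
    exact Ideal.mul_mem_left _ _ hg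
  have h2 : (X s : MvPolynomial (Fin 4) k) ^ n0 - (C (u / v) * X t) ^ n0 ∈ I := by
    obtain ⟨w, hw⟩ := sub_dvd_pow_sub_pow (X s : MvPolynomial (Fin 4) k) (C (u / v) * X t) n0
    rw [hw]
    exact Ideal.mul_mem_right _ _ h1
  have h3 : X s ^ n0 * X t ^ n1 - C ((u / v) ^ n0) * X t ^ (n0 + n1)
      = ((X s : MvPolynomial (Fin 4) k) ^ n0 - (C (u / v) * X t) ^ n0) * X t ^ n1 := by
    rw [mul_pow, ← C_pow, pow_add]; ring
  rw [h3]
  exact Ideal.mul_mem_right _ _ h2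

lemma xside (P : P1 k × P1 k) (i : ℕ) :
    ∃ (t : Fin 4) (γ : ℕ → ℕ → k), eval (rv P) (X t) ≠ 0 ∧
      ∀ n0 n1, n0 + n1 = i →
        (X 0 : MvPolynomial (Fin 4) k) ^ n0 * X 1 ^ n1 - C (γ n0 n1) * X t ^ i
          ∈ pointIdeal k P := by
  have hlx : lX k P.1 ∈ pointIdeal k P := Ideal.subset_span (by simp)
  rcases vec_cases P.1.rep_nonzero with h | h
  · refine ⟨0, fun n0 n1 => (P.1.rep 1 / P.1.rep 0) ^ n1, by simpa using h, ?_⟩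
    intro n0 n1 hn
    have hg : C (P.1.rep 0) * X 1 - C (P.1.rep 1) * X 0 ∈ pointIdeal k P := by
      have he : C (P.1.rep 0) * X 1 - C (P.1.rep 1) * X 0 = -(lX k P.1) := by
        rw [lX]; ring
      rw [he]; exact neg_mem hlx
    have hm := pow_sub_mem h hg n1 n0
    have he : (X 0 : MvPolynomial (Fin 4) k) ^ n0 * X 1 ^ n1
        - C ((P.1.rep 1 / P.1.rep 0) ^ n1) * X 0 ^ i
        = X 1 ^ n1 * X 0 ^ n0 - C ((P.1.rep 1 / P.1.rep 0) ^ n1) * X 0 ^ (n1 + n0) := by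
      rw [show n1 + n0 = i by omega]; ring
    rw [he]; exact hm
  · refine ⟨1, fun n0 n1 => (P.1.rep 0 / P.1.rep 1) ^ n0, by simpa using h, ?_⟩
    intro n0 n1 hn
    have hm := pow_sub_mem h hlx n0 n1
    rw [hn] at hm
    exact hm

lemma yside (P : P1 k × P1 k) (j : ℕ) :
    ∃ (t : Fin 4) (γ : ℕ → ℕ → k), eval (rv P) (X t) ≠ 0 ∧
      ∀ n0 n1, n0 + n1 = j →
        (X 2 : MvPolynomial (Fin 4) k) ^ n0 * X 3 ^ n1 - C (γ n0 n1) * X t ^ j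
          ∈ pointIdeal k P := by
  have hly : lY k P.2 ∈ pointIdeal k P := Ideal.subset_span (by simp)
  rcases vec_cases P.2.rep_nonzero with h | h
  · refine ⟨2, fun n0 n1 => (P.2.rep 1 / P.2.rep 0) ^ n1, by simpa using h, ?_⟩
    intro n0 n1 hn
    have hg : C (P.2.rep 0) * X 3 - C (P.2.rep 1) * X 2 ∈ pointIdeal k P := by
      have he : C (P.2.rep 0) * X 3 - C (P.2.rep 1) * X 2 = -(lY k P.2) := by
        rw [lY]; ring
      rw [he]; exact neg_mem hly
    have hm := pow_sub_mem h hg n1 n0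
    have he : (X 2 : MvPolynomial (Fin 4) k) ^ n0 * X 3 ^ n1
        - C ((P.2.rep 1 / P.2.rep 0) ^ n1) * X 2 ^ j
        = X 3 ^ n1 * X 2 ^ n0 - C ((P.2.rep 1 / P.2.rep 0) ^ n1) * X 2 ^ (n1 + n0) := by
      rw [show n1 + n0 = j by omega]; ring
    rw [he]; exact hm
  · refine ⟨3, fun n0 n1 => (P.2.rep 0 / P.2.rep 1) ^ n0, by simpa using h, ?_⟩
    intro n0 n1 hn
    have hm := pow_sub_mem h hly n0 n1
    rw [hn] at hm
    exact hm

lemma reduce (P : P1 k × P1 k) (i j : ℕ) :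
    ∃ M : MvPolynomial (Fin 4) k, eval (rv P) M ≠ 0 ∧
      ∀ f ∈ bicomp k i j, ∃ c : k, f - C c * M ∈ pointIdeal k P := by
  obtain ⟨tx, γx, hx0, hx⟩ := xside P i
  obtain ⟨ty, γy, hy0, hy⟩ := yside P j
  refine ⟨X tx ^ i * X ty ^ j, ?_, ?_⟩
  · simp only [map_mul, map_pow, eval_X]
    exact mul_ne_zero (pow_ne_zero _ (by simpa using hx0)) (pow_ne_zero _ (by simpa using hy0))
  intro f hf
  induction hf using Submodule.span_induction with
  | mem f hf =>
    obtain ⟨m, hm1, hm2, rfl⟩ := hf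
    refine ⟨γx (m 0) (m 1) * γy (m 2) (m 3), ?_⟩
    have hmono : (monomial m 1 : MvPolynomial (Fin 4) k)
        = X 0 ^ m 0 * X 1 ^ m 1 * (X 2 ^ m 2 * X 3 ^ m 3) := by
      rw [monomial_eq, C_1, one_mul, Finsupp.prod_pow, Fin.prod_univ_four]
      ring
    have h1 := hx (m 0) (m 1) hm1
    have h2 := hy (m 2) (m 3) hm2
    have key : (monomial m 1 : MvPolynomial (Fin 4) k)
        - C (γx (m 0) (m 1) * γy (m 2) (m 3)) * (X tx ^ i * X ty ^ j)
        = (X 0 ^ m 0 * X 1 ^ m 1 - C (γx (m 0) (m 1)) * X tx ^ i) * (X 2 ^ m 2 * X 3 ^ m 3)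
          + (C (γx (m 0) (m 1)) * X tx ^ i)
            * (X 2 ^ m 2 * X 3 ^ m 3 - C (γy (m 2) (m 3)) * X ty ^ j) := by
      rw [hmono, C_mul]; ring
    rw [key]
    exact add_mem (Ideal.mul_mem_right _ _ h1) (Ideal.mul_mem_left _ _ h2)
  | zero => exact ⟨0, by simp⟩
  | add f g hf hg ihf ihg =>
    obtain ⟨c, hc⟩ := ihf
    obtain ⟨c', hc'⟩ := ihg
    refine ⟨c + c', ?_⟩
    have he : f + g - C (c + c') * (X tx ^ i * X ty ^ j)
        = (f - C c * (X tx ^ i * X ty ^ j)) + (g - C c' * (X tx ^ i * X ty ^ j)) := by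
      rw [C_add]; ring
    rw [he]; exact add_mem hc hc'
  | smul a f hf ihf =>
    obtain ⟨c, hc⟩ := ihf
    refine ⟨a * c, ?_⟩
    have he : a • f - C (a * c) * (X tx ^ i * X ty ^ j)
        = C a * (f - C c * (X tx ^ i * X ty ^ j)) := by
      rw [smul_eq_C_mul, C_mul]; ring
    rw [he]; exact Ideal.mul_mem_left _ _ hc

lemma mem_pointIdeal_iff (P : P1 k × P1 k) {i j : ℕ} {f : MvPolynomial (Fin 4) k}
    (hf : f ∈ bicomp k i j) :
    f ∈ pointIdeal k P ↔ eval (rv P) f = 0 := by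
  obtain ⟨M, hM, hred⟩ := reduce P i j
  constructor
  · exact eval_eq_zero_of_mem
  · intro h
    obtain ⟨c, hc⟩ := hred f hf
    have h0 := eval_eq_zero_of_mem hc
    have hc0 : c = 0 := by
      simp only [map_sub, map_mul, eval_C, h, zero_sub, neg_eq_zero] at h0
      rcases mul_eq_zero.1 h0 with h' | h'
      · exact h'
      · exact absurd h' hM
    rw [hc0] at hc
    simpa using hc

end Stmt4Aux
end C2
section C3
namespace Stmt4Aux

variable {k : Type} [Field k]

lemma bicomp_congr {i i' j j' : ℕ} (hi : i = i') (hj : j = j') :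
    bicomp k i j = bicomp k i' j' := by rw [hi, hj]

lemma monomial_mem_bicomp {i j : ℕ} {m : Fin 4 →₀ ℕ} (h1 : m 0 + m 1 = i)
    (h2 : m 2 + m 3 = j) : (monomial m 1 : MvPolynomial (Fin 4) k) ∈ bicomp k i j :=
  Submodule.subset_span ⟨m, h1, h2, rfl⟩

lemma bicomp_mul_monomial {i j i' j' : ℕ} {f : MvPolynomial (Fin 4) k}
    (hf : f ∈ bicomp k i j) {m : Fin 4 →₀ ℕ} (h1 : m 0 + m 1 = i') (h2 : m 2 + m 3 = j') :
    f * monomial m 1 ∈ bicomp k (i + i') (j + j') := by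
  induction hf using Submodule.span_induction with
  | mem f hf =>
    obtain ⟨m', hm1, hm2, rfl⟩ := hf
    rw [monomial_mul, one_mul]
    exact monomial_mem_bicomp (by simp [Finsupp.add_apply]; omega)
      (by simp [Finsupp.add_apply]; omega)
  | zero => rw [zero_mul]; exact zero_mem _
  | add f g hf hg ihf ihg => rw [add_mul]; exact add_mem ihf ihg
  | smul a f hf ihf => rw [smul_mul_assoc]; exact Submodule.smul_mem _ _ ihf

lemma bicomp_mul {i j i' j' : ℕ} {f g : MvPolynomial (Fin 4) k}
    (hf : f ∈ bicomp k i j) (hg : g ∈ bicomp k i' j') :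
    f * g ∈ bicomp k (i + i') (j + j') := by
  induction hg using Submodule.span_induction with
  | mem g hg =>
    obtain ⟨m', hm1, hm2, rfl⟩ := hg
    exact bicomp_mul_monomial hf hm1 hm2
  | zero => rw [mul_zero]; exact zero_mem _
  | add f' g' hf' hg' ihf ihg => rw [mul_add]; exact add_mem ihf ihg
  | smul a f' hf' ihf => rw [mul_smul_comm]; exact Submodule.smul_mem _ _ ihf

lemma one_mem_bicomp : (1 : MvPolynomial (Fin 4) k) ∈ bicomp k 0 0 := by
  have : (1 : MvPolynomial (Fin 4) k) = monomial 0 1 := by simp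
  rw [this]
  exact monomial_mem_bicomp (by simp) (by simp)

lemma X_mem_bicomp_x {t : Fin 4} (h : t = 0 ∨ t = 1) :
    (X t : MvPolynomial (Fin 4) k) ∈ bicomp k 1 0 := by
  have : (X t : MvPolynomial (Fin 4) k) = monomial (Finsupp.single t 1) 1 := by
    rw [← pow_one (X t : MvPolynomial (Fin 4) k), X_pow_eq_monomial]
  rw [this]
  rcases h with rfl | rfl <;>
    exact monomial_mem_bicomp (by simp [Finsupp.single_apply]) (by simp [Finsupp.single_apply])

lemma X_mem_bicomp_y {t : Fin 4} (h : t = 2 ∨ t = 3) :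
    (X t : MvPolynomial (Fin 4) k) ∈ bicomp k 0 1 := by
  have : (X t : MvPolynomial (Fin 4) k) = monomial (Finsupp.single t 1) 1 := by
    rw [← pow_one (X t : MvPolynomial (Fin 4) k), X_pow_eq_monomial]
  rw [this]
  rcases h with rfl | rfl <;>
    exact monomial_mem_bicomp (by simp [Finsupp.single_apply]) (by simp [Finsupp.single_apply])

lemma lX_mem_bicomp (A : P1 k) : lX k A ∈ bicomp k 1 0 := by
  rw [lX]
  have h0 : (C (A.rep 1) * X 0 : MvPolynomial (Fin 4) k) ∈ bicomp k 1 0 := by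
    rw [← smul_eq_C_mul]
    exact Submodule.smul_mem _ _ (X_mem_bicomp_x (Or.inl rfl))
  have h1 : (C (A.rep 0) * X 1 : MvPolynomial (Fin 4) k) ∈ bicomp k 1 0 := by
    rw [← smul_eq_C_mul]
    exact Submodule.smul_mem _ _ (X_mem_bicomp_x (Or.inr rfl))
  exact sub_mem h0 h1

lemma lY_mem_bicomp (B : P1 k) : lY k B ∈ bicomp k 0 1 := by
  rw [lY]
  have h0 : (C (B.rep 1) * X 2 : MvPolynomial (Fin 4) k) ∈ bicomp k 0 1 := by
    rw [← smul_eq_C_mul]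
    exact Submodule.smul_mem _ _ (X_mem_bicomp_y (Or.inl rfl))
  have h1 : (C (B.rep 0) * X 3 : MvPolynomial (Fin 4) k) ∈ bicomp k 0 1 := by
    rw [← smul_eq_C_mul]
    exact Submodule.smul_mem _ _ (X_mem_bicomp_y (Or.inr rfl))
  exact sub_mem h0 h1

lemma prod_mem_bicomp_x {α : Type} (s : Finset α) (F : α → MvPolynomial (Fin 4) k)
    (h : ∀ x ∈ s, F x ∈ bicomp k 1 0) : (∏ x ∈ s, F x) ∈ bicomp k s.card 0 := by
  induction s using Finset.cons_induction with
  | empty => simpa using (one_mem_bicomp : (1 : MvPolynomial (Fin 4) k) ∈ bicomp k 0 0)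
  | cons a s ha ih =>
    rw [Finset.prod_cons, Finset.card_cons,
      bicomp_congr (show s.card + 1 = 1 + s.card from by omega) (show (0:ℕ) = 0 + 0 from rfl)]
    exact bicomp_mul (h a (Finset.mem_cons_self a s))
      (ih fun x hx => h x (Finset.mem_cons_of_mem hx))

lemma prod_mem_bicomp_y {α : Type} (s : Finset α) (F : α → MvPolynomial (Fin 4) k)
    (h : ∀ x ∈ s, F x ∈ bicomp k 0 1) : (∏ x ∈ s, F x) ∈ bicomp k 0 s.card := by
  induction s using Finset.cons_induction with
  | empty => simpa using (one_mem_bicomp : (1 : MvPolynomial (Fin 4) k) ∈ bicomp k 0 0)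
  | cons a s ha ih =>
    rw [Finset.prod_cons, Finset.card_cons,
      bicomp_congr (show (0:ℕ) = 0 + 0 from rfl)
        (show (s.card:ℕ) + 1 = 1 + s.card from by omega)]
    exact bicomp_mul (h a (Finset.mem_cons_self a s))
      (ih fun x hx => h x (Finset.mem_cons_of_mem hx))

lemma pow_mem_bicomp_x {f : MvPolynomial (Fin 4) k} (hf : f ∈ bicomp k 1 0) (n : ℕ) :
    f ^ n ∈ bicomp k n 0 := by
  induction n with
  | zero => rw [pow_zero]; exact one_mem_bicomp
  | succ n ih =>
    rw [pow_succ, bicomp_congr (rfl : n + 1 = n + 1) (show (0:ℕ) = 0 + 0 from rfl)]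
    exact bicomp_mul ih hf

lemma pow_mem_bicomp_y {f : MvPolynomial (Fin 4) k} (hf : f ∈ bicomp k 0 1) (n : ℕ) :
    f ^ n ∈ bicomp k 0 n := by
  induction n with
  | zero => rw [pow_zero]; exact one_mem_bicomp
  | succ n ih =>
    rw [pow_succ, bicomp_congr (show (0:ℕ) = 0 + 0 from rfl) (rfl : n + 1 = n + 1)]
    exact bicomp_mul ih hf

lemma bicomp_fd (i j : ℕ) : FiniteDimensional k (bicomp k i j) := by
  apply FiniteDimensional.span_of_finite
  have hsub : {f : MvPolynomial (Fin 4) k |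
      ∃ m : Fin 4 →₀ ℕ, m 0 + m 1 = i ∧ m 2 + m 3 = j ∧ f = monomial m 1}
      ⊆ (fun st : Fin (i + 1) × Fin (j + 1) =>
          (monomial (Finsupp.single 0 (st.1 : ℕ) + Finsupp.single 1 (i - (st.1 : ℕ))
            + Finsupp.single 2 (st.2 : ℕ) + Finsupp.single 3 (j - (st.2 : ℕ))) 1
            : MvPolynomial (Fin 4) k)) '' Set.univ := by
    rintro f ⟨m, h1, h2, rfl⟩
    refine ⟨(⟨m 0, by omega⟩, ⟨m 2, by omega⟩), trivial, ?_⟩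
    have hdec : m = Finsupp.single 0 (m 0) + Finsupp.single 1 (m 1)
        + Finsupp.single 2 (m 2) + Finsupp.single 3 (m 3) := by
      ext t
      fin_cases t <;> simp [Finsupp.single_apply]
    symm
    show (monomial m 1 : MvPolynomial (Fin 4) k)
      = monomial (Finsupp.single 0 (m 0) + Finsupp.single 1 (i - m 0)
          + Finsupp.single 2 (m 2) + Finsupp.single 3 (j - m 2)) 1
    rw [show i - m 0 = m 1 from by omega, show j - m 2 = m 3 from by omega, ← hdec]
  exact Set.Finite.subset (Set.Finite.image _ Set.finite_univ) hsub

end Stmt4Aux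
end C3
section C4
namespace Stmt4Aux

variable {k : Type} [Field k]

/-- evaluation at a vector, as a linear map. -/
def evalAtL (r : Fin 4 → k) : MvPolynomial (Fin 4) k →ₗ[k] k where
  toFun f := eval r f
  map_add' f g := by simp
  map_smul' a f := by simp [smul_eq_C_mul]

variable (Xs : Finset (P1 k × P1 k)) (i j : ℕ)

/-- the combined evaluation map on the bigraded piece. -/
def Emap : bicomp k i j →ₗ[k] (↥Xs → k) :=
  LinearMap.pi fun P => (evalAtL (rv (P : P1 k × P1 k))).comp (bicomp k i j).subtype

lemma Emap_apply (f : bicomp k i j) (P : ↥Xs) :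
    Emap Xs i j f P = eval (rv (P : P1 k × P1 k)) (f : MvPolynomial (Fin 4) k) := rfl

lemma mem_IX_iff {f : MvPolynomial (Fin 4) k} :
    f ∈ IX k Xs ↔ ∀ P ∈ Xs, f ∈ pointIdeal k P := by
  simp [IX, Ideal.mem_iInf]

lemma inter_eq_map_ker :
    Submodule.restrictScalars k (IX k Xs) ⊓ bicomp k i j
      = Submodule.map (bicomp k i j).subtype (LinearMap.ker (Emap Xs i j)) := by
  ext f
  simp only [Submodule.mem_inf, Submodule.restrictScalars_mem, Submodule.mem_map,
    LinearMap.mem_ker]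
  constructor
  · rintro ⟨hI, hb⟩
    refine ⟨⟨f, hb⟩, ?_, rfl⟩
    funext P
    have hfP : f ∈ pointIdeal k (P : P1 k × P1 k) :=
      (mem_IX_iff Xs).1 hI _ P.2
    rw [Emap_apply]
    exact (mem_pointIdeal_iff _ hb).1 hfP
  · rintro ⟨⟨g, hg⟩, hker, rfl⟩
    refine ⟨?_, hg⟩
    rw [mem_IX_iff]
    intro P hP
    show g ∈ pointIdeal k P
    rw [mem_pointIdeal_iff _ hg]
    have := congrFun hker (⟨P, hP⟩ : ↥Xs)
    rw [Emap_apply] at this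
    simpa using this

lemma hilb_eq_rank :
    hilb k (IX k Xs) i j
      = (Module.finrank k (LinearMap.range (Emap Xs i j)) : ℤ) := by
  haveI := bicomp_fd (k := k) i j
  rw [hilb, inter_eq_map_ker, Submodule.finrank_map_subtype_eq]
  have h := LinearMap.finrank_range_add_finrank_ker (Emap Xs i j)
  omega

end Stmt4Aux
end C4
section C5
namespace Stmt4Aux

variable {k : Type} [Field k]
variable (Xs : Finset (P1 k × P1 k)) (i j : ℕ)

/-- the fiber of `X` over `A ∈ π₁(X)`. -/
def fib (A : P1 k) : Finset (P1 k × P1 k) := Xs.filter (fun P => P.1 = A)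

lemma fib_card (A : P1 k) : (fib Xs A).card = alphaA k Xs A := rfl

lemma mem_fib {A : P1 k} {P : P1 k × P1 k} : P ∈ fib Xs A ↔ P ∈ Xs ∧ P.1 = A :=
  Finset.mem_filter

/-- evaluation on the fiber over `A`. -/
def eAmap (A : P1 k) : bicomp k i j →ₗ[k] (↥(fib Xs A) → k) :=
  LinearMap.pi fun P => (evalAtL (rv (P : P1 k × P1 k))).comp (bicomp k i j).subtype

lemma eAmap_apply (A : P1 k) (f : bicomp k i j) (P : ↥(fib Xs A)) :
    eAmap Xs i j A f P = eval (rv (P : P1 k × P1 k)) (f : MvPolynomial (Fin 4) k) := rfl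

/-- extension by zero from the fiber over `A`. -/
def jAmap (A : P1 k) : (↥(fib Xs A) → k) →ₗ[k] (↥Xs → k) :=
  LinearMap.pi fun P => if h : (P : P1 k × P1 k) ∈ fib Xs A
    then LinearMap.proj (⟨(P : P1 k × P1 k), h⟩ : ↥(fib Xs A)) else 0

lemma jAmap_apply (A : P1 k) (v : ↥(fib Xs A) → k) (P : ↥Xs) :
    jAmap Xs A v P
      = if h : (P : P1 k × P1 k) ∈ fib Xs A then v ⟨(P : P1 k × P1 k), h⟩ else 0 := by
  rw [jAmap, LinearMap.pi_apply]
  by_cases h : (P : P1 k × P1 k) ∈ fib Xs A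
  · rw [dif_pos h, dif_pos h]; rfl
  · rw [dif_neg h, dif_neg h]; rfl

lemma Emap_eq_sum :
    Emap Xs i j = ∑ A ∈ pi1 k Xs, (jAmap Xs A).comp (eAmap Xs i j A) := by
  apply LinearMap.ext; intro f
  funext P
  rw [LinearMap.sum_apply, Finset.sum_apply]
  have hmem : (P : P1 k × P1 k).1 ∈ pi1 k Xs := by
    rw [pi1]; exact Finset.mem_image_of_mem Prod.fst P.2
  rw [Finset.sum_eq_single_of_mem ((P : P1 k × P1 k).1) hmem]
  · have hm : (P : P1 k × P1 k) ∈ fib Xs (P : P1 k × P1 k).1 :=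
      (mem_fib Xs).2 ⟨P.2, rfl⟩
    rw [LinearMap.comp_apply, jAmap_apply, dif_pos hm, eAmap_apply, Emap_apply]
  · intro A hA hne
    have hm : ¬ ((P : P1 k × P1 k) ∈ fib Xs A) := by
      rw [mem_fib]
      rintro ⟨-, h⟩
      exact hne h.symm
    rw [LinearMap.comp_apply, jAmap_apply, dif_neg hm]

/-- partial evaluation in the `x`-variables at (a representative of) `A`. -/
def pevA (A : P1 k) : MvPolynomial (Fin 4) k →ₐ[k] MvPolynomial (Fin 4) k :=
  aeval ![C (A.rep 0), C (A.rep 1), X 2, X 3]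

def mY (t : Fin (j + 1)) : Fin 4 →₀ ℕ :=
  Finsupp.single 2 (t : ℕ) + Finsupp.single 3 (j - (t : ℕ))

/-- the coefficient extraction map. -/
def DA (A : P1 k) : bicomp k i j →ₗ[k] (Fin (j + 1) → k) :=
  LinearMap.pi fun t =>
    { toFun := fun f => coeff (mY j t) (pevA A (f : MvPolynomial (Fin 4) k))
      map_add' := fun f g => by
        simp only [Submodule.coe_add, map_add, coeff_add]
      map_smul' := fun a f => by
        simp only [SetLike.val_smul, smul_eq_C_mul, map_mul, RingHom.id_apply]
        rw [show (pevA A) (C a) = C a by simp [pevA], coeff_C_mul, smul_eq_mul] }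

/-- the Vandermonde-type matrix of the fiber over `A`. -/
def VA (A : P1 k) : (Fin (j + 1) → k) →ₗ[k] (↥(fib Xs A) → k) :=
  (Matrix.of fun (P : ↥(fib Xs A)) (t : Fin (j + 1)) =>
    (P : P1 k × P1 k).2.rep 0 ^ (t : ℕ) * (P : P1 k × P1 k).2.rep 1 ^ (j - (t : ℕ))).mulVecLin

lemma eval_eq_sum_coeff (A : P1 k) (P : P1 k × P1 k) (hP1 : P.1 = A)
    {g : MvPolynomial (Fin 4) k} (hg : g ∈ bicomp k i j) :
    eval (rv P) g = ∑ t : Fin (j + 1),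
      (P.2.rep 0 ^ (t : ℕ) * P.2.rep 1 ^ (j - (t : ℕ))) * coeff (mY j t) (pevA A g) := by
  induction hg using Submodule.span_induction with
  | zero => simp
  | add f g hf hg ihf ihg =>
    simp only [map_add, coeff_add, mul_add, Finset.sum_add_distrib, ihf, ihg]
  | smul a f hf ih =>
    simp only [smul_eq_C_mul, map_mul, show (pevA A) (C a) = C a by simp [pevA],
      coeff_C_mul, eval_C, ih, Finset.mul_sum]
    congr 1; funext t; ring
  | mem g hgen =>
    obtain ⟨m, h1, h2, rfl⟩ := hgen
    set t0 : Fin (j + 1) := ⟨m 2, by omega⟩ with ht0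
    have hmm : (monomial (Finsupp.single 2 (m 2) + Finsupp.single 3 (m 3)) 1
        : MvPolynomial (Fin 4) k) = X 2 ^ m 2 * X 3 ^ m 3 := by
      rw [X_pow_eq_monomial, X_pow_eq_monomial, monomial_mul, mul_one]
    have hpev : pevA A (monomial m 1)
        = C (A.rep 0 ^ m 0 * A.rep 1 ^ m 1)
          * monomial (Finsupp.single 2 (m 2) + Finsupp.single 3 (m 3)) 1 := by
      rw [pevA, aeval_monomial, Finsupp.prod_pow, Fin.prod_univ_four, hmm]
      simp only [Matrix.cons_val_zero, Matrix.cons_val_one, Matrix.head_cons,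
        Matrix.cons_val_two, Matrix.tail_cons, Matrix.cons_val_three]
      rw [map_one, one_mul, ← C_pow, ← C_pow, ← C_mul]
      ring
    have hcoeff : ∀ t : Fin (j + 1), coeff (mY j t) (pevA A (monomial m 1))
        = if t = t0 then A.rep 0 ^ m 0 * A.rep 1 ^ m 1 else 0 := by
      intro t
      rw [hpev, coeff_C_mul, coeff_monomial]
      have hiff : (Finsupp.single 2 (m 2) + Finsupp.single 3 (m 3) = mY j t) ↔ t = t0 := by
        constructor
        · intro h
          have h2 := DFunLike.congr_fun h (2 : Fin 4)
          simp only [mY, Finsupp.add_apply, Finsupp.single_apply] at h2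
          norm_num at h2
          exact Fin.ext (by rw [ht0]; exact h2.symm)
        · rintro rfl
          rw [mY, show ((t0 : ℕ)) = m 2 from rfl, show j - m 2 = m 3 from by omega]
      by_cases h : t = t0
      · rw [if_pos h, if_pos (hiff.2 h), mul_one]
      · rw [if_neg h, if_neg (fun hc => h (hiff.1 hc)), mul_zero]
    rw [eval_monomial, Finsupp.prod_pow, Fin.prod_univ_four]
    simp only [rv0, rv1, rv2, rv3, one_mul, hP1]
    simp only [hcoeff, mul_ite, mul_zero, Finset.sum_ite_eq' Finset.univ t0]
    simp only [Finset.mem_univ, if_pos, ht0]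
    rw [show j - m 2 = m 3 from by omega]
    ring

lemma eAmap_factor (A : P1 k) :
    eAmap Xs i j A = (VA Xs j A).comp (DA i j A) := by
  apply LinearMap.ext; intro f
  funext P
  rw [eAmap_apply, LinearMap.comp_apply]
  have hP1 : (P : P1 k × P1 k).1 = A := ((mem_fib Xs).1 P.2).2
  rw [eval_eq_sum_coeff i j A (P : P1 k × P1 k) hP1 f.2]
  rw [VA, Matrix.mulVecLin_apply]
  rfl

lemma finrank_range_add_le {V W : Type} [AddCommGroup V] [Module k V]
    [AddCommGroup W] [Module k W] [FiniteDimensional k W] (f g : V →ₗ[k] W) :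
    Module.finrank k (LinearMap.range (f + g))
      ≤ Module.finrank k (LinearMap.range f) + Module.finrank k (LinearMap.range g) := by
  have hle : LinearMap.range (f + g) ≤ LinearMap.range f ⊔ LinearMap.range g := by
    rintro _ ⟨x, rfl⟩
    exact Submodule.mem_sup.2 ⟨f x, ⟨x, rfl⟩, g x, ⟨x, rfl⟩, rfl⟩
  refine le_trans (Submodule.finrank_mono hle) ?_
  have h := Submodule.finrank_sup_add_finrank_inf_eq (LinearMap.range f) (LinearMap.range g)
  omega

lemma finrank_range_sum_le {α V W : Type} [AddCommGroup V] [Module k V]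
    [AddCommGroup W] [Module k W] [FiniteDimensional k W] (s : Finset α)
    (F : α → (V →ₗ[k] W)) :
    Module.finrank k (LinearMap.range (∑ a ∈ s, F a))
      ≤ ∑ a ∈ s, Module.finrank k (LinearMap.range (F a)) := by
  induction s using Finset.cons_induction with
  | empty =>
    simp
    exact Submodule.finrank_eq_zero.2 (LinearMap.range_eq_bot.2 rfl)
  | cons a s ha ih =>
    rw [Finset.sum_cons, Finset.sum_cons]
    exact le_trans (finrank_range_add_le _ _) (by omega)

set_option synthInstance.maxHeartbeats 1000000 in
lemma rank_summand_le (A : P1 k) :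
    Module.finrank k (LinearMap.range ((jAmap Xs A).comp (eAmap Xs i j A)))
      ≤ min (alphaA k Xs A) (j + 1) := by
  refine le_min ?_ ?_
  · rw [LinearMap.range_comp]
    refine le_trans (Submodule.finrank_map_le _ _) ?_
    refine le_trans (Submodule.finrank_le _) ?_
    rw [Module.finrank_pi, Fintype.card_coe, fib_card]
  · rw [eAmap_factor, ← LinearMap.comp_assoc, LinearMap.range_comp]
    refine le_trans (Submodule.finrank_map_le _ _) ?_
    refine le_trans (Submodule.finrank_le _) ?_
    rw [Module.finrank_pi, Fintype.card_fin]

lemma rank_le_sum :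
    Module.finrank k (LinearMap.range (Emap Xs i j))
      ≤ ∑ A ∈ pi1 k Xs, min (alphaA k Xs A) (j + 1) := by
  rw [Emap_eq_sum]
  refine le_trans (finrank_range_sum_le _ _) ?_
  exact Finset.sum_le_sum fun A _ => rank_summand_le Xs i j A

end Stmt4Aux
end C5
section C6
namespace Stmt4Aux

variable {k : Type} [Field k]

def padX (A : P1 k) : MvPolynomial (Fin 4) k := if A.rep 0 = 0 then X 1 else X 0

def padY (B : P1 k) : MvPolynomial (Fin 4) k := if B.rep 0 = 0 then X 3 else X 2

lemma padX_mem (A : P1 k) : padX A ∈ bicomp k 1 0 := by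
  rw [padX]; split_ifs
  · exact X_mem_bicomp_x (Or.inr rfl)
  · exact X_mem_bicomp_x (Or.inl rfl)

lemma padY_mem (B : P1 k) : padY B ∈ bicomp k 0 1 := by
  rw [padY]; split_ifs
  · exact X_mem_bicomp_y (Or.inr rfl)
  · exact X_mem_bicomp_y (Or.inl rfl)

lemma eval_padX_ne {P : P1 k × P1 k} {A : P1 k} (h : P.1 = A) :
    eval (rv P) (padX A) ≠ 0 := by
  subst h
  rw [padX]; split_ifs with h0
  · rcases vec_cases P.1.rep_nonzero with h1 | h1
    · exact absurd h0 h1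
    · simpa using h1
  · simpa using h0

lemma eval_padY_ne {P : P1 k × P1 k} {B : P1 k} (h : P.2 = B) :
    eval (rv P) (padY B) ≠ 0 := by
  subst h
  rw [padY]; split_ifs with h0
  · rcases vec_cases P.2.rep_nonzero with h1 | h1
    · exact absurd h0 h1
    · simpa using h1
  · simpa using h0

variable (Xs : Finset (P1 k × P1 k)) (i j : ℕ)

/-- the `x`-separator of `A`. -/
def FA (A : P1 k) : MvPolynomial (Fin 4) k :=
  (∏ A' ∈ (pi1 k Xs).erase A, lX k A') * (padX A) ^ (i + 1 - (pi1 k Xs).card)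

/-- the `y`-separator of `Q` within a finite set `T` of points. -/
def gT (T : Finset (P1 k × P1 k)) (Q : P1 k × P1 k) : MvPolynomial (Fin 4) k :=
  (∏ Q' ∈ T.erase Q, lY k Q'.2) * (padY Q.2) ^ (j + 1 - T.card)

lemma FA_mem {A : P1 k} (hA : A ∈ pi1 k Xs) (hi : (pi1 k Xs).card ≤ i + 1) :
    FA Xs i A ∈ bicomp k i 0 := by
  have hc1 : 1 ≤ (pi1 k Xs).card := Finset.card_pos.2 ⟨A, hA⟩
  have h1 : (∏ A' ∈ (pi1 k Xs).erase A, lX k A') ∈ bicomp k ((pi1 k Xs).erase A).card 0 :=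
    prod_mem_bicomp_x _ _ fun A' _ => lX_mem_bicomp A'
  have h2 : (padX A) ^ (i + 1 - (pi1 k Xs).card) ∈ bicomp k (i + 1 - (pi1 k Xs).card) 0 :=
    pow_mem_bicomp_x (padX_mem A) _
  have h3 := bicomp_mul h1 h2
  rw [FA, bicomp_congr
    (show (i : ℕ) = ((pi1 k Xs).erase A).card + (i + 1 - (pi1 k Xs).card) from by
      rw [Finset.card_erase_of_mem hA]; omega)
    (show (0 : ℕ) = 0 + 0 from rfl)]
  exact h3

lemma gT_mem {T : Finset (P1 k × P1 k)} {Q : P1 k × P1 k} (hQ : Q ∈ T)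
    (hT : T.card ≤ j + 1) : gT j T Q ∈ bicomp k 0 j := by
  have hc1 : 1 ≤ T.card := Finset.card_pos.2 ⟨Q, hQ⟩
  have h1 : (∏ Q' ∈ T.erase Q, lY k Q'.2) ∈ bicomp k 0 (T.erase Q).card :=
    prod_mem_bicomp_y _ _ fun Q' _ => lY_mem_bicomp _
  have h2 : (padY Q.2) ^ (j + 1 - T.card) ∈ bicomp k 0 (j + 1 - T.card) :=
    pow_mem_bicomp_y (padY_mem _) _
  have h3 := bicomp_mul h1 h2
  rw [bicomp_congr (show (0 : ℕ) = 0 + 0 from rfl)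
    (show (j : ℕ) = (T.erase Q).card + (j + 1 - T.card) from by
      rw [Finset.card_erase_of_mem hQ]; omega)]
  exact h3

lemma eval_FA_ne {A : P1 k} {P : P1 k × P1 k} (hP : P.1 = A) :
    eval (rv P) (FA Xs i A) ≠ 0 := by
  rw [FA, map_mul, map_prod, map_pow]
  refine mul_ne_zero (Finset.prod_ne_zero_iff.2 fun A' hA' => ?_)
    (pow_ne_zero _ (eval_padX_ne hP))
  intro hz
  rw [eval_lX_eq_zero_iff] at hz
  exact (Finset.mem_erase.1 hA').1 (by rw [hz, hP])

lemma eval_FA_eq_zero {A A' : P1 k} (hA : A ∈ pi1 k Xs) (hne : A ≠ A')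
    {P : P1 k × P1 k} (hP : P.1 = A) :
    eval (rv P) (FA Xs i A') = 0 := by
  rw [FA, map_mul, map_prod]
  apply mul_eq_zero_of_left
  apply Finset.prod_eq_zero (Finset.mem_erase.2 ⟨hne, hA⟩)
  rw [eval_lX_eq_zero_iff]
  exact hP.symm

lemma eval_gT_ne {T : Finset (P1 k × P1 k)} {Q : P1 k × P1 k} (hQ : Q ∈ T)
    (hfib : ∀ Q' ∈ T, ∀ Q'' ∈ T, Q'.1 = Q''.1) :
    eval (rv Q) (gT j T Q) ≠ 0 := by
  rw [gT, map_mul, map_prod, map_pow]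
  refine mul_ne_zero (Finset.prod_ne_zero_iff.2 fun Q' hQ' => ?_)
    (pow_ne_zero _ (eval_padY_ne rfl))
  intro hz
  rw [eval_lY_eq_zero_iff] at hz
  have hQ'T := Finset.mem_erase.1 hQ'
  apply hQ'T.1
  have h1 : Q'.1 = Q.1 := hfib Q' hQ'T.2 Q hQ
  exact Prod.ext h1 hz


lemma eval_gT_eq_zero {T : Finset (P1 k × P1 k)} {Q Q' : P1 k × P1 k} (hQ : Q ∈ T)
    (hne : Q ≠ Q') :
    eval (rv Q) (gT j T Q') = 0 := by
  rw [gT, map_mul, map_prod]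
  apply mul_eq_zero_of_left
  apply Finset.prod_eq_zero (Finset.mem_erase.2 ⟨hne, hQ⟩)
  rw [eval_lY_eq_zero_iff]


end Stmt4Aux
end C6
section C7
namespace Stmt4Aux

variable {k : Type} [Field k]
variable (Xs : Finset (P1 k × P1 k)) (i j : ℕ)

set_option synthInstance.maxHeartbeats 1000000 in
lemma sum_le_rank (hi : (pi1 k Xs).card ≤ i + 1) :
    ∑ A ∈ pi1 k Xs, min (alphaA k Xs A) (j + 1)
      ≤ Module.finrank k (LinearMap.range (Emap Xs i j)) := by
  have hch : ∀ A : P1 k, ∃ T, T ⊆ fib Xs A ∧ T.card = min (alphaA k Xs A) (j + 1) := by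
    intro A
    obtain ⟨T, h1, h2⟩ := Finset.exists_subset_card_eq
      (show min (alphaA k Xs A) (j + 1) ≤ (fib Xs A).card from by
        rw [fib_card]; exact min_le_left _ _)
    exact ⟨T, h1, h2⟩
  choose T hT1 hT2 using hch
  have hfibT : ∀ (A : P1 k), ∀ Q ∈ T A, Q ∈ Xs ∧ Q.1 = A := fun A Q hQ =>
    (mem_fib Xs).1 (hT1 A hQ)
  have hmem : ∀ A : P1 k, A ∈ pi1 k Xs → ∀ Q ∈ T A,
      FA Xs i A * gT j (T A) Q ∈ bicomp k i j := by
    intro A hA Q hQ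
    have h1 := FA_mem Xs i hA hi
    have h2 : gT j (T A) Q ∈ bicomp k 0 j :=
      gT_mem j hQ (by rw [hT2]; exact min_le_right _ _)
    have h3 := bicomp_mul h1 h2
    rw [bicomp_congr (show (i : ℕ) = i + 0 from by omega) (show (j : ℕ) = 0 + j from by omega)]
    exact h3
  let ι := Σ A : {A // A ∈ pi1 k Xs}, {Q // Q ∈ T (A : P1 k)}
  let v : ι → (↥Xs → k) := fun p =>
    Emap Xs i j ⟨FA Xs i (p.1 : P1 k) * gT j (T (p.1 : P1 k)) (p.2 : P1 k × P1 k),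
      hmem _ p.1.2 _ p.2.2⟩
  have hv : ∀ (p : ι) (pt : ↥Xs), v p pt
      = eval (rv (pt : P1 k × P1 k))
          (FA Xs i (p.1 : P1 k) * gT j (T (p.1 : P1 k)) (p.2 : P1 k × P1 k)) :=
    fun p pt => rfl
  have hli : LinearIndependent k v := by
    rw [Fintype.linearIndependent_iff]
    intro g hg p0
    obtain ⟨A0, Q0⟩ := p0
    have hQ0 := hfibT _ _ Q0.2
    set pt : ↥Xs := ⟨(Q0 : P1 k × P1 k), hQ0.1⟩ with hpt
    have hgc := congrFun hg pt
    rw [Finset.sum_apply] at hgc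
    simp only [Pi.smul_apply, smul_eq_mul, Pi.zero_apply] at hgc
    rw [Finset.sum_eq_single_of_mem (⟨A0, Q0⟩ : ι) (Finset.mem_univ _)] at hgc
    · have hd : eval (rv (Q0 : P1 k × P1 k))
          (FA Xs i (A0 : P1 k) * gT j (T (A0 : P1 k)) (Q0 : P1 k × P1 k)) ≠ 0 := by
        rw [map_mul]
        refine mul_ne_zero (eval_FA_ne Xs i hQ0.2) (eval_gT_ne j Q0.2 ?_)
        intro Q' h1 Q'' h2
        rw [(hfibT _ _ h1).2, (hfibT _ _ h2).2]
      rw [hv] at hgc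
      rcases mul_eq_zero.1 hgc with h | h
      · exact h
      · exact absurd h hd
    · rintro ⟨A', Q'⟩ - hne
      rw [hv]
      rcases eq_or_ne A' A0 with rfl | hA
      · have hQne : (Q0 : P1 k × P1 k) ≠ (Q' : P1 k × P1 k) := by
          intro h
          exact hne (by rw [Subtype.ext h.symm])
        rw [map_mul, eval_gT_eq_zero j Q0.2 hQne, mul_zero, mul_zero]
      · have hAne : (A0 : P1 k) ≠ (A' : P1 k) := fun h => hA (Subtype.ext h.symm)
        rw [map_mul, eval_FA_eq_zero Xs i A0.2 hAne hQ0.2, zero_mul, mul_zero]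
  have hspan : Submodule.span k (Set.range v) ≤ LinearMap.range (Emap Xs i j) := by
    rw [Submodule.span_le]
    rintro - ⟨p, rfl⟩
    exact ⟨_, rfl⟩
  have hcard := finrank_span_eq_card hli
  have hmono := Submodule.finrank_mono hspan
  have hcount : Fintype.card ι = ∑ A ∈ pi1 k Xs, min (alphaA k Xs A) (j + 1) := by
    rw [Fintype.card_sigma]
    have : ∀ A : {A // A ∈ pi1 k Xs}, Fintype.card {Q // Q ∈ T (A : P1 k)}
        = min (alphaA k Xs (A : P1 k)) (j + 1) := by
      intro A
      rw [Fintype.card_coe, hT2]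
    rw [Finset.sum_congr rfl fun A _ => this A]
    exact Finset.sum_coe_sort (pi1 k Xs) fun A => min (alphaA k Xs A) (j + 1)
  omega

end Stmt4Aux
end C7

/-- For all `i ≥ |π₁(X)| − 1` and all `j ≥ 0`,
`H_{S/I_X}(i,j) = Σ_{A ∈ π₁(X)} min(α_A, j+1)`. -/
theorem stmt4 [CharZero k] (Xs : Finset (P1 k × P1 k)) (i j : ℕ)
    (hi : (pi1 k Xs).card ≤ i + 1) :
    hilb k (IX k Xs) i j = ∑ A ∈ pi1 k Xs, (min (alphaA k Xs A) (j + 1) : ℤ) := by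
  have h1 := Stmt4Aux.hilb_eq_rank Xs i j
  have h2 := Stmt4Aux.rank_le_sum Xs i j
  have h3 := Stmt4Aux.sum_le_rank Xs i j hi
  have he : Module.finrank k (LinearMap.range (Stmt4Aux.Emap Xs i j))
      = ∑ A ∈ pi1 k Xs, min (alphaA k Xs A) (j + 1) := le_antisymm h2 h3
  rw [h1, he]
  push_cast
  rfl

end
end

section
/- Let X be a finite set of distinct points in ℙ¹ × ℙ¹ over a field k, and let L be a bihomogeneous form of degree (0,1) whose image in S/I_X is a non-zero-divisor. Then for all i ≥ |π₁(X)| − 1 and all j ≥ 0, H_{S/(I_X + ⟨L⟩)}(i,j) = #{A ∈ π₁(X) : α_A ≥ j+1}. -/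
open MvPolynomial
open scoped Classical

noncomputable section

variable (k : Type) [Field k]

def wt : Fin 4 → ℕ × ℕ := ![(1,0),(1,0),(0,1),(0,1)]

lemma weight_wt (m : Fin 4 →₀ ℕ) : Finsupp.weight wt m = (m 0 + m 1, m 2 + m 3) := by
  rw [Finsupp.weight_apply, Finsupp.sum_fintype]
  · simp [Fin.sum_univ_four, wt, Prod.ext_iff, smul_eq_mul]
  · intro i; simp

lemma bicomp_eq_whs (i j : ℕ) :
    bicomp k i j = weightedHomogeneousSubmodule k wt (i, j) := by
  apply le_antisymm
  · rw [bicomp, Submodule.span_le]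
    rintro f ⟨m, h1, h2, rfl⟩
    rw [SetLike.mem_coe, mem_weightedHomogeneousSubmodule]
    exact isWeightedHomogeneous_monomial _ _ _ (by rw [weight_wt, h1, h2])
  · intro f hf
    rw [mem_weightedHomogeneousSubmodule] at hf
    rw [← f.support_sum_monomial_coeff]
    apply Submodule.sum_mem
    intro m hm
    have hw := hf (mem_support_iff.mp hm)
    rw [weight_wt, Prod.mk.injEq] at hw
    have : (monomial m (coeff m f) : MvPolynomial (Fin 4) k) = coeff m f • monomial m 1 := by
      rw [smul_monomial, smul_eq_mul, mul_one]
    rw [this]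
    exact Submodule.smul_mem _ _ (Submodule.subset_span ⟨m, hw.1, hw.2, rfl⟩)

def expSet (i j : ℕ) : Finset (Fin 4 →₀ ℕ) :=
  ((Finset.range (i+1)) ×ˢ (Finset.range (j+1))).image
    (fun p => Finsupp.equivFunOnFinite.symm ![p.1, i - p.1, p.2, j - p.2])

lemma mem_expSet {i j : ℕ} (m : Fin 4 →₀ ℕ) :
    m ∈ expSet i j ↔ m 0 + m 1 = i ∧ m 2 + m 3 = j := by
  constructor
  · rintro hm
    simp only [expSet, Finset.mem_image, Finset.mem_product, Finset.mem_range] at hm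
    obtain ⟨⟨a, b⟩, ⟨ha, hb⟩, rfl⟩ := hm
    simp only [Finsupp.coe_equivFunOnFinite_symm]
    constructor
    · show a + (i - a) = i; omega
    · show b + (j - b) = j; omega
  · rintro ⟨h1, h2⟩
    simp only [expSet, Finset.mem_image, Finset.mem_product, Finset.mem_range]
    refine ⟨(m 0, m 2), ⟨by omega, by omega⟩, ?_⟩
    rw [Equiv.symm_apply_eq]
    funext s
    fin_cases s <;> simp <;> omega

lemma card_expSet (i j : ℕ) : (expSet i j).card = (i+1)*(j+1) := by
  rw [expSet, Finset.card_image_of_injective, Finset.card_product, Finset.card_range,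
    Finset.card_range]
  intro p q h
  have h' := congrArg Finsupp.equivFunOnFinite h
  simp only [Equiv.apply_symm_apply] at h'
  have h0 := congrFun h' 0
  have h2 := congrFun h' 2
  simp at h0 h2
  exact Prod.ext h0 h2

lemma bicomp_eq_span (i j : ℕ) :
    bicomp k i j =
      Submodule.span k ((fun m => (monomial m 1 : MvPolynomial (Fin 4) k)) '' (expSet i j)) := by
  rw [bicomp]
  congr 1
  ext f
  simp only [Set.mem_setOf_eq, Set.mem_image, Finset.mem_coe, mem_expSet]
  constructor
  · rintro ⟨m, h1, h2, rfl⟩; exact ⟨m, ⟨h1, h2⟩, rfl⟩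
  · rintro ⟨m, ⟨h1, h2⟩, rfl⟩; exact ⟨m, h1, h2, rfl⟩

instance bicomp_fd (i j : ℕ) : FiniteDimensional k (bicomp k i j) := by
  rw [bicomp_eq_span]
  exact FiniteDimensional.span_of_finite k ((expSet i j).finite_toSet.image _)

lemma finrank_bicomp (i j : ℕ) : Module.finrank k (bicomp k i j) = (i+1)*(j+1) := by
  classical
  rw [bicomp_eq_span]
  rw [← card_expSet i j]
  have hli : LinearIndependent k (fun m : (expSet i j : Set (Fin 4 →₀ ℕ)) =>
      (monomial (m : Fin 4 →₀ ℕ) (1:k) : MvPolynomial (Fin 4) k)) := by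
    have := (MvPolynomial.basisMonomials (Fin 4) k).linearIndependent
    rw [coe_basisMonomials] at this
    exact this.comp _ Subtype.val_injective
  rw [Set.image_eq_range, finrank_span_eq_card hli]
  simp

-- abbreviation for the component map
abbrev wc (d : ℕ × ℕ) : MvPolynomial (Fin 4) k →ₗ[k] MvPolynomial (Fin 4) k :=
  weightedHomogeneousComponent wt d

lemma X_mem_bicomp (n : Fin 4) (i j : ℕ)
    (h1 : (Finsupp.single n 1) 0 + (Finsupp.single n 1) 1 = i)
    (h2 : (Finsupp.single n 1) 2 + (Finsupp.single n 1) 3 = j) :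
    (X n : MvPolynomial (Fin 4) k) ∈ bicomp k i j :=
  Submodule.subset_span ⟨Finsupp.single n 1, h1, h2, rfl⟩

lemma lX_mem (A : P1 k) : lX k A ∈ bicomp k 1 0 := by
  rw [lX, C_mul', C_mul']
  exact sub_mem (Submodule.smul_mem _ _ (X_mem_bicomp k 0 1 0 (by simp) (by simp)))
    (Submodule.smul_mem _ _ (X_mem_bicomp k 1 1 0 (by simp) (by simp)))

lemma lY_mem (B : P1 k) : lY k B ∈ bicomp k 0 1 := by
  rw [lY, C_mul', C_mul']
  exact sub_mem (Submodule.smul_mem _ _ (X_mem_bicomp k 2 0 1 (by simp) (by simp)))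
    (Submodule.smul_mem _ _ (X_mem_bicomp k 3 0 1 (by simp) (by simp)))

-- component of a product with a weighted homogeneous poly lies in the span
lemma wc_mul_mem (d e : ℕ × ℕ) (L h : MvPolynomial (Fin 4) k)
    (hL : IsWeightedHomogeneous wt L e) :
    wc k d (h * L) ∈ Ideal.span {L} := by
  induction h using MvPolynomial.induction_on' with
  | monomial m c =>
    have hhom : IsWeightedHomogeneous wt (monomial m c * L) (Finsupp.weight wt m + e) :=
      (isWeightedHomogeneous_monomial wt m c rfl).mul hL
    by_cases hd : d = Finsupp.weight wt m + e
    · rw [hd, hhom.weightedHomogeneousComponent_same]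
      exact Ideal.mul_mem_left _ _ (Ideal.subset_span rfl)
    · rw [hhom.weightedHomogeneousComponent_ne d hd]
      exact Ideal.zero_mem _
  | add p q hp hq =>
    rw [add_mul, map_add]
    exact Ideal.add_mem _ hp hq

lemma wc_mul_y (i j : ℕ) (L h : MvPolynomial (Fin 4) k) (hL : L ∈ bicomp k 0 1) :
    wc k (i, j+1) (h * L) = wc k (i, j) h * L := by
  rw [bicomp_eq_whs, mem_weightedHomogeneousSubmodule] at hL
  induction h using MvPolynomial.induction_on' with
  | monomial m c =>
    have hhom : IsWeightedHomogeneous wt (monomial m c * L) (Finsupp.weight wt m + (0,1)) :=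
      (isWeightedHomogeneous_monomial wt m c rfl).mul hL
    have hm : IsWeightedHomogeneous wt (monomial m c : MvPolynomial (Fin 4) k)
        (Finsupp.weight wt m) := isWeightedHomogeneous_monomial wt m c rfl
    by_cases hd : Finsupp.weight wt m = (i, j)
    · rw [show ((i,j+1) : ℕ×ℕ) = Finsupp.weight wt m + (0,1) by
        rw [hd, Prod.mk_add_mk]; simp,
        hhom.weightedHomogeneousComponent_same, ← hd,
        hm.weightedHomogeneousComponent_same]
    · rw [hhom.weightedHomogeneousComponent_ne _ (by
        intro hcon
        apply hd
        have : ((i,j) : ℕ × ℕ) + (0,1) = Finsupp.weight wt m + (0,1) := by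
          rw [← hcon, Prod.mk_add_mk]; simp
        exact (add_right_cancel this).symm),
        hm.weightedHomogeneousComponent_ne _ (Ne.symm hd), zero_mul]
  | add p q hp hq =>
    rw [add_mul, map_add, map_add, hp, hq, add_mul]

lemma wc_mul_y0 (i : ℕ) (L h : MvPolynomial (Fin 4) k) (hL : L ∈ bicomp k 0 1) :
    wc k (i, 0) (h * L) = 0 := by
  rw [bicomp_eq_whs, mem_weightedHomogeneousSubmodule] at hL
  induction h using MvPolynomial.induction_on' with
  | monomial m c =>
    have hhom : IsWeightedHomogeneous wt (monomial m c * L) (Finsupp.weight wt m + (0,1)) :=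
      (isWeightedHomogeneous_monomial wt m c rfl).mul hL
    rw [hhom.weightedHomogeneousComponent_ne _ (by
      intro hcon
      have := congrArg Prod.snd hcon
      simp [Prod.snd_add] at this)]
  | add p q hp hq =>
    rw [add_mul, map_add, hp, hq, add_zero]

-- continuing: evaluation and substitution
variable {k}

lemma pointIdeal_homog (P : P1 k × P1 k) (d : ℕ × ℕ) (f : MvPolynomial (Fin 4) k)
    (hf : f ∈ pointIdeal k P) : wc k d f ∈ pointIdeal k P := by
  rw [pointIdeal, Ideal.mem_span_pair] at hf
  obtain ⟨a, b, h⟩ := hf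
  have hlX : IsWeightedHomogeneous wt (lX k P.1) (1,0) := by
    have := lX_mem k P.1; rwa [bicomp_eq_whs, mem_weightedHomogeneousSubmodule] at this
  have hlY : IsWeightedHomogeneous wt (lY k P.2) (0,1) := by
    have := lY_mem k P.2; rwa [bicomp_eq_whs, mem_weightedHomogeneousSubmodule] at this
  have h1 : wc k d (a * lX k P.1) ∈ Ideal.span {lX k P.1} := wc_mul_mem k d _ _ _ hlX
  have h2 : wc k d (b * lY k P.2) ∈ Ideal.span {lY k P.2} := wc_mul_mem k d _ _ _ hlY
  rw [← h, map_add]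
  refine Ideal.add_mem _ ?_ ?_
  · exact Ideal.span_mono (Set.singleton_subset_iff.mpr (by left; rfl)) h1
  · exact Ideal.span_mono (Set.singleton_subset_iff.mpr (by right; rfl)) h2

lemma IX_homog (Xs : Finset (P1 k × P1 k)) (d : ℕ × ℕ) (f : MvPolynomial (Fin 4) k)
    (hf : f ∈ IX k Xs) : wc k d f ∈ IX k Xs := by
  simp only [IX, Ideal.mem_iInf] at hf ⊢
  intro P hP
  exact pointIdeal_homog P d f (hf P hP)

/-- The coordinate vector of a point. -/
def vec (P : P1 k × P1 k) : Fin 4 → k := ![P.1.rep 0, P.1.rep 1, P.2.rep 0, P.2.rep 1]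

lemma eval_lX_self (P : P1 k × P1 k) : eval (vec P) (lX k P.1) = 0 := by
  simp [lX, vec]; ring

lemma eval_lY_self (P : P1 k × P1 k) : eval (vec P) (lY k P.2) = 0 := by
  simp [lY, vec]; ring

lemma eval_eq_zero_of_mem_pointIdeal {P : P1 k × P1 k} {f : MvPolynomial (Fin 4) k}
    (hf : f ∈ pointIdeal k P) : eval (vec P) f = 0 := by
  rw [pointIdeal, Ideal.mem_span_pair] at hf
  obtain ⟨a, b, h⟩ := hf
  rw [← h, map_add, map_mul, map_mul, eval_lX_self, eval_lY_self, mul_zero, mul_zero, add_zero]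

lemma exists_dual (A : P1 k) : ∃ c : Fin 2 → k, c 0 * A.rep 0 + c 1 * A.rep 1 = 1 := by
  have h := Projectivization.rep_nonzero A
  by_cases h0 : A.rep 0 = 0
  · have h1 : A.rep 1 ≠ 0 := by
      intro h1
      apply h
      funext s
      fin_cases s
      · exact h0
      · exact h1
    exact ⟨![0, (A.rep 1)⁻¹], by simp [inv_mul_cancel₀ h1]⟩
  · exact ⟨![(A.rep 0)⁻¹, 0], by simp [inv_mul_cancel₀ h0]⟩

lemma sub_aeval_mem (I : Ideal (MvPolynomial (Fin 4) k)) (s : Fin 4 → MvPolynomial (Fin 4) k)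
    (hs : ∀ n, X n - s n ∈ I) (f : MvPolynomial (Fin 4) k) : f - aeval s f ∈ I := by
  induction f using MvPolynomial.induction_on with
  | C r => rw [aeval_C, algebraMap_eq, sub_self]; exact I.zero_mem
  | add p q hp hq =>
    rw [map_add]
    have := I.add_mem hp hq
    convert this using 1
    ring
  | mul_X p n hp =>
    rw [map_mul, aeval_X]
    have h2 := I.add_mem (I.mul_mem_right (X n) hp) (I.mul_mem_left (aeval s p) (hs n))
    convert h2 using 1
    ring

lemma aeval_sub_eq (i j : ℕ) (a b : Fin 2 → k) (u v : MvPolynomial (Fin 4) k)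
    {f : MvPolynomial (Fin 4) k} (hf : f ∈ bicomp k i j) :
    aeval ![C (a 0) * u, C (a 1) * u, C (b 0) * v, C (b 1) * v] f
      = eval ![a 0, a 1, b 0, b 1] f • (u ^ i * v ^ j) := by
  set s : Fin 4 → MvPolynomial (Fin 4) k := ![C (a 0) * u, C (a 1) * u, C (b 0) * v, C (b 1) * v]
  set x : Fin 4 → k := ![a 0, a 1, b 0, b 1]
  let Φ : MvPolynomial (Fin 4) k →ₗ[k] MvPolynomial (Fin 4) k := (aeval s).toLinearMap
  let Ψ : MvPolynomial (Fin 4) k →ₗ[k] MvPolynomial (Fin 4) k :=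
    LinearMap.smulRight (aeval x : MvPolynomial (Fin 4) k →ₐ[k] k).toLinearMap (u ^ i * v ^ j)
  have key : ∀ g ∈ bicomp k i j, Φ g = Ψ g := by
    intro g hg
    refine LinearMap.eqOn_span ?_ hg
    rintro _ ⟨m, h1, h2, rfl⟩
    show aeval s (monomial m 1) = (aeval x (monomial m 1)) • (u ^ i * v ^ j)
    rw [aeval_monomial, aeval_monomial,
      Finsupp.prod_fintype _ _ (fun n => pow_zero _),
      Finsupp.prod_fintype _ _ (fun n => pow_zero _),
      Fin.prod_univ_four, Fin.prod_univ_four]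
    simp only [s, x, Matrix.cons_val_zero, Matrix.cons_val_one, Matrix.head_cons,
      Matrix.cons_val_two, Matrix.tail_cons, Matrix.cons_val_three, map_one, one_mul]
    rw [← h1, ← h2, Algebra.smul_def, algebraMap_eq]
    simp only [map_mul, map_pow, mul_pow, pow_add]
    ring
  have hx : aeval x f = eval x f := by rw [aeval_def, Algebra.algebraMap_self]; rfl
  calc aeval s f = Φ f := rfl
    _ = Ψ f := key f hf
    _ = aeval x f • (u ^ i * v ^ j) := rfl
    _ = eval x f • (u ^ i * v ^ j) := by rw [hx]

lemma mem_pointIdeal_of_eval_zero (P : P1 k × P1 k) (i j : ℕ) {f : MvPolynomial (Fin 4) k}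
    (hf : f ∈ bicomp k i j) (h0 : eval (vec P) f = 0) : f ∈ pointIdeal k P := by
  obtain ⟨c, hc⟩ := exists_dual P.1
  obtain ⟨d, hd⟩ := exists_dual P.2
  set u : MvPolynomial (Fin 4) k := C (c 0) * X 0 + C (c 1) * X 1 with hu
  set v : MvPolynomial (Fin 4) k := C (d 0) * X 2 + C (d 1) * X 3 with hv
  set s : Fin 4 → MvPolynomial (Fin 4) k :=
    ![C (P.1.rep 0) * u, C (P.1.rep 1) * u, C (P.2.rep 0) * v, C (P.2.rep 1) * v] with hs
  have hXs : ∀ n, X n - s n ∈ pointIdeal k P := by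
    have hCx : (C (c 0) * C (P.1.rep 0) + C (c 1) * C (P.1.rep 1) :
        MvPolynomial (Fin 4) k) = 1 := by
      rw [← C_mul, ← C_mul, ← C_add, hc, C_1]
    have hCy : (C (d 0) * C (P.2.rep 0) + C (d 1) * C (P.2.rep 1) :
        MvPolynomial (Fin 4) k) = 1 := by
      rw [← C_mul, ← C_mul, ← C_add, hd, C_1]
    have memX : lX k P.1 ∈ pointIdeal k P := Ideal.subset_span (by left; rfl)
    have memY : lY k P.2 ∈ pointIdeal k P := Ideal.subset_span (by right; rfl)
    intro n
    fin_cases n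
    · have : (X 0 : MvPolynomial (Fin 4) k) - s 0 = C (c 1) * lX k P.1 := by
        show (X 0 : MvPolynomial (Fin 4) k) - C (P.1.rep 0) * u = C (c 1) * lX k P.1
        rw [hu, lX]
        linear_combination (-(X 0 : MvPolynomial (Fin 4) k)) * hCx
      exact (show (X 0 : MvPolynomial (Fin 4) k) - s 0 ∈ _ from
        this ▸ Ideal.mul_mem_left _ _ memX)
    · have : (X 1 : MvPolynomial (Fin 4) k) - s 1 = (- C (c 0)) * lX k P.1 := by
        show (X 1 : MvPolynomial (Fin 4) k) - C (P.1.rep 1) * u = (- C (c 0)) * lX k P.1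
        rw [hu, lX]
        linear_combination (-(X 1 : MvPolynomial (Fin 4) k)) * hCx
      exact (show (X 1 : MvPolynomial (Fin 4) k) - s 1 ∈ _ from
        this ▸ Ideal.mul_mem_left _ _ memX)
    · have : (X 2 : MvPolynomial (Fin 4) k) - s 2 = C (d 1) * lY k P.2 := by
        show (X 2 : MvPolynomial (Fin 4) k) - C (P.2.rep 0) * v = C (d 1) * lY k P.2
        rw [hv, lY]
        linear_combination (-(X 2 : MvPolynomial (Fin 4) k)) * hCy
      exact (show (X 2 : MvPolynomial (Fin 4) k) - s 2 ∈ _ from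
        this ▸ Ideal.mul_mem_left _ _ memY)
    · have : (X 3 : MvPolynomial (Fin 4) k) - s 3 = (- C (d 0)) * lY k P.2 := by
        show (X 3 : MvPolynomial (Fin 4) k) - C (P.2.rep 1) * v = (- C (d 0)) * lY k P.2
        rw [hv, lY]
        linear_combination (-(X 3 : MvPolynomial (Fin 4) k)) * hCy
      exact (show (X 3 : MvPolynomial (Fin 4) k) - s 3 ∈ _ from
        this ▸ Ideal.mul_mem_left _ _ memY)
  have hcong := sub_aeval_mem (pointIdeal k P) s hXs f
  have hsub : aeval s f = eval (vec P) f • (u ^ i * v ^ j) :=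
    aeval_sub_eq i j P.1.rep P.2.rep u v hf
  rw [h0, zero_smul] at hsub
  rw [hsub, sub_zero] at hcong
  exact hcong

lemma aeval_subY_eq (j : ℕ) (a b : Fin 2 → k) (v : MvPolynomial (Fin 4) k)
    {f : MvPolynomial (Fin 4) k} (hf : f ∈ bicomp k 0 j) :
    aeval ![X 0, X 1, C (b 0) * v, C (b 1) * v] f
      = eval ![a 0, a 1, b 0, b 1] f • (v ^ j) := by
  set s : Fin 4 → MvPolynomial (Fin 4) k := ![X 0, X 1, C (b 0) * v, C (b 1) * v]
  set x : Fin 4 → k := ![a 0, a 1, b 0, b 1]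
  let Φ : MvPolynomial (Fin 4) k →ₗ[k] MvPolynomial (Fin 4) k := (aeval s).toLinearMap
  let Ψ : MvPolynomial (Fin 4) k →ₗ[k] MvPolynomial (Fin 4) k :=
    LinearMap.smulRight (aeval x : MvPolynomial (Fin 4) k →ₐ[k] k).toLinearMap (v ^ j)
  have key : ∀ g ∈ bicomp k 0 j, Φ g = Ψ g := by
    intro g hg
    refine LinearMap.eqOn_span ?_ hg
    rintro _ ⟨m, h1, h2, rfl⟩
    have hm0 : m 0 = 0 := by omega
    have hm1 : m 1 = 0 := by omega
    show aeval s (monomial m 1) = (aeval x (monomial m 1)) • (v ^ j)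
    rw [aeval_monomial, aeval_monomial,
      Finsupp.prod_fintype _ _ (fun n => pow_zero _),
      Finsupp.prod_fintype _ _ (fun n => pow_zero _),
      Fin.prod_univ_four, Fin.prod_univ_four]
    simp only [s, x, Matrix.cons_val_zero, Matrix.cons_val_one, Matrix.head_cons,
      Matrix.cons_val_two, Matrix.tail_cons, Matrix.cons_val_three, map_one, one_mul]
    rw [hm0, hm1, ← h2, Algebra.smul_def, algebraMap_eq]
    simp only [map_mul, map_pow, mul_pow, pow_add, pow_zero, C_1, one_pow, one_mul, mul_one]
    ring
  have hx : aeval x f = eval x f := by rw [aeval_def, Algebra.algebraMap_self]; rfl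
  calc aeval s f = Φ f := rfl
    _ = Ψ f := key f hf
    _ = aeval x f • (v ^ j) := rfl
    _ = eval x f • (v ^ j) := by rw [hx]

lemma mem_span_lY_of_eval_zero (P : P1 k × P1 k) (j : ℕ) {f : MvPolynomial (Fin 4) k}
    (hf : f ∈ bicomp k 0 j) (h0 : eval (vec P) f = 0) : f ∈ Ideal.span {lY k P.2} := by
  obtain ⟨d, hd⟩ := exists_dual P.2
  set v : MvPolynomial (Fin 4) k := C (d 0) * X 2 + C (d 1) * X 3 with hv
  set s : Fin 4 → MvPolynomial (Fin 4) k :=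
    ![X 0, X 1, C (P.2.rep 0) * v, C (P.2.rep 1) * v] with hs
  have hXs : ∀ n, X n - s n ∈ Ideal.span {lY k P.2} := by
    have hCy : (C (d 0) * C (P.2.rep 0) + C (d 1) * C (P.2.rep 1) :
        MvPolynomial (Fin 4) k) = 1 := by
      rw [← C_mul, ← C_mul, ← C_add, hd, C_1]
    have memY : lY k P.2 ∈ Ideal.span {lY k P.2} := Ideal.subset_span rfl
    intro n
    fin_cases n
    · show (X 0 : MvPolynomial (Fin 4) k) - X 0 ∈ _
      rw [sub_self]; exact Ideal.zero_mem _
    · show (X 1 : MvPolynomial (Fin 4) k) - X 1 ∈ _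
      rw [sub_self]; exact Ideal.zero_mem _
    · have : (X 2 : MvPolynomial (Fin 4) k) - s 2 = C (d 1) * lY k P.2 := by
        show (X 2 : MvPolynomial (Fin 4) k) - C (P.2.rep 0) * v = C (d 1) * lY k P.2
        rw [hv, lY]
        linear_combination (-(X 2 : MvPolynomial (Fin 4) k)) * hCy
      exact (show (X 2 : MvPolynomial (Fin 4) k) - s 2 ∈ _ from
        this ▸ Ideal.mul_mem_left _ _ memY)
    · have : (X 3 : MvPolynomial (Fin 4) k) - s 3 = (- C (d 0)) * lY k P.2 := by
        show (X 3 : MvPolynomial (Fin 4) k) - C (P.2.rep 1) * v = (- C (d 0)) * lY k P.2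
        rw [hv, lY]
        linear_combination (-(X 3 : MvPolynomial (Fin 4) k)) * hCy
      exact (show (X 3 : MvPolynomial (Fin 4) k) - s 3 ∈ _ from
        this ▸ Ideal.mul_mem_left _ _ memY)
  have hcong := sub_aeval_mem (Ideal.span {lY k P.2}) s hXs f
  have hsub : aeval s f = eval (vec P) f • (v ^ j) :=
    aeval_subY_eq j P.1.rep P.2.rep v hf
  rw [h0, zero_smul] at hsub
  rw [hsub, sub_zero] at hcong
  exact hcong

lemma factor_lY (P : P1 k × P1 k) (j : ℕ) {f : MvPolynomial (Fin 4) k}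
    (hf : f ∈ bicomp k 0 (j+1)) (h0 : eval (vec P) f = 0) :
    ∃ g ∈ bicomp k 0 j, f = g * lY k P.2 := by
  obtain ⟨h, hh⟩ := Ideal.mem_span_singleton'.mp (mem_span_lY_of_eval_zero P (j+1) hf h0)
  refine ⟨wc k (0, j) h, ?_, ?_⟩
  · rw [bicomp_eq_whs]
    exact weightedHomogeneousComponent_mem wt h (0, j)
  · have hfh : IsWeightedHomogeneous wt f ((0 : ℕ), j+1) := by
      have := hf; rwa [bicomp_eq_whs, mem_weightedHomogeneousSubmodule] at this
    calc f = wc k (0, j+1) f := (hfh.weightedHomogeneousComponent_same).symm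
      _ = wc k (0, j+1) (h * lY k P.2) := by rw [hh]
      _ = wc k (0, j) h * lY k P.2 := wc_mul_y k 0 j _ _ (lY_mem k P.2)

lemma bicomp00 {f : MvPolynomial (Fin 4) k} (hf : f ∈ bicomp k 0 0) : ∃ r : k, f = C r := by
  have : f ∈ Submodule.span k {(1 : MvPolynomial (Fin 4) k)} := by
    refine Submodule.span_le.mpr ?_ hf
    rintro _ ⟨m, h1, h2, rfl⟩
    have hm : m = 0 := by
      ext n; fin_cases n <;> simp <;> omega
    rw [hm]
    simp only [monomial_zero', C_1, Set.mem_singleton_iff, SetLike.mem_coe]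
    exact Submodule.mem_span_singleton_self _
  obtain ⟨r, hr⟩ := Submodule.mem_span_singleton.mp this
  exact ⟨r, by rw [← hr, smul_eq_C_mul, mul_one]⟩

lemma fin2_ext {v w : Fin 2 → k} (h0 : v 0 = w 0) (h1 : v 1 = w 1) : v = w := by
  funext s; fin_cases s <;> simpa

lemma det_ne_zero_of_ne {A A' : P1 k} (h : A ≠ A') :
    A.rep 1 * A'.rep 0 - A.rep 0 * A'.rep 1 ≠ 0 := by
  intro hdet
  apply h
  have hv := Projectivization.rep_nonzero A
  have hw := Projectivization.rep_nonzero A'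
  rw [← Projectivization.mk_rep A, ← Projectivization.mk_rep A']
  rw [Projectivization.mk_eq_mk_iff']
  by_cases h0 : A.rep 0 = 0
  · have h1 : A.rep 1 ≠ 0 := by
      intro h1; exact hv (fin2_ext (by simpa using h0) (by simpa using h1))
    have hw1 : A'.rep 0 = 0 := by
      rw [h0, zero_mul, sub_zero] at hdet
      rcases mul_eq_zero.mp hdet with h' | h'
      · exact absurd h' h1
      · exact h'
    refine ⟨A.rep 1 / A'.rep 1, ?_⟩
    have hw2 : A'.rep 1 ≠ 0 := by
      intro h1; exact hw (fin2_ext (by simpa using hw1) (by simpa using h1))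
    refine fin2_ext ?_ ?_
    · show A.rep 1 / A'.rep 1 * A'.rep 0 = A.rep 0
      rw [hw1, h0, mul_zero]
    · show A.rep 1 / A'.rep 1 * A'.rep 1 = A.rep 1
      field_simp
  · refine ⟨A.rep 0 / A'.rep 0, ?_⟩
    have hw0 : A'.rep 0 ≠ 0 := by
      intro hcon
      rw [hcon, mul_zero] at hdet
      have : A'.rep 1 = 0 := by
        rw [zero_sub, neg_eq_zero] at hdet
        rcases mul_eq_zero.mp hdet with h' | h'
        · exact absurd h' h0
        · exact h'
      exact hw (fin2_ext (by simpa using hcon) (by simpa using this))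
    refine fin2_ext ?_ ?_
    · show A.rep 0 / A'.rep 0 * A'.rep 0 = A.rep 0
      field_simp
    · show A.rep 0 / A'.rep 0 * A'.rep 1 = A.rep 1
      field_simp
      have := sub_eq_zero.mp hdet
      linear_combination -this

lemma bicomp_mul {i j i' j' : ℕ} {f g : MvPolynomial (Fin 4) k}
    (hf : f ∈ bicomp k i j) (hg : g ∈ bicomp k i' j') : f * g ∈ bicomp k (i+i') (j+j') := by
  rw [bicomp_eq_whs, mem_weightedHomogeneousSubmodule] at hf hg ⊢
  have := hf.mul hg
  rwa [Prod.mk_add_mk] at this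

lemma one_mem_bicomp : (1 : MvPolynomial (Fin 4) k) ∈ bicomp k 0 0 :=
  Submodule.subset_span ⟨0, by simp, by simp, by simp⟩

lemma bicomp_pow {f : MvPolynomial (Fin 4) k} (hf : f ∈ bicomp k 0 1) (e : ℕ) :
    f ^ e ∈ bicomp k 0 e := by
  induction e with
  | zero => rw [pow_zero]; exact one_mem_bicomp
  | succ n ih =>
    rw [pow_succ]
    have := bicomp_mul ih hf
    simpa using this

lemma bicomp_pow_x {f : MvPolynomial (Fin 4) k} (hf : f ∈ bicomp k 1 0) (e : ℕ) :
    f ^ e ∈ bicomp k e 0 := by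
  induction e with
  | zero => rw [pow_zero]; exact one_mem_bicomp
  | succ n ih =>
    rw [pow_succ]
    have := bicomp_mul ih hf
    simpa using this

lemma bicomp_prod_y {α : Type*} (T : Finset α) (g : α → MvPolynomial (Fin 4) k)
    (hg : ∀ a ∈ T, g a ∈ bicomp k 0 1) : (∏ a ∈ T, g a) ∈ bicomp k 0 T.card := by
  classical
  induction T using Finset.induction_on with
  | empty => simpa using one_mem_bicomp (k := k)
  | insert a s hnotmem ih =>
    rw [Finset.prod_insert hnotmem, Finset.card_insert_of_notMem hnotmem]
    have h1 := hg a (Finset.mem_insert_self a s)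
    have h2 := ih (fun b hb => hg b (Finset.mem_insert_of_mem hb))
    have := bicomp_mul h1 h2
    simpa [add_comm] using this

lemma bicomp_prod_x {α : Type*} (T : Finset α) (g : α → MvPolynomial (Fin 4) k)
    (hg : ∀ a ∈ T, g a ∈ bicomp k 1 0) : (∏ a ∈ T, g a) ∈ bicomp k T.card 0 := by
  classical
  induction T using Finset.induction_on with
  | empty => simpa using one_mem_bicomp (k := k)
  | insert a s hnotmem ih =>
    rw [Finset.prod_insert hnotmem, Finset.card_insert_of_notMem hnotmem]
    have h1 := hg a (Finset.mem_insert_self a s)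
    have h2 := ih (fun b hb => hg b (Finset.mem_insert_of_mem hb))
    have := bicomp_mul h1 h2
    simpa [add_comm] using this

/-- complementary linear forms with value 1 at the point -/
def cfX (A : P1 k) : MvPolynomial (Fin 4) k :=
  C ((exists_dual A).choose 0) * X 0 + C ((exists_dual A).choose 1) * X 1

def cfY (B : P1 k) : MvPolynomial (Fin 4) k :=
  C ((exists_dual B).choose 0) * X 2 + C ((exists_dual B).choose 1) * X 3

lemma cfX_mem (A : P1 k) : cfX A ∈ bicomp k 1 0 := by
  rw [cfX, C_mul', C_mul']
  exact add_mem (Submodule.smul_mem _ _ (X_mem_bicomp k 0 1 0 (by simp) (by simp)))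
    (Submodule.smul_mem _ _ (X_mem_bicomp k 1 1 0 (by simp) (by simp)))

lemma cfY_mem (B : P1 k) : cfY B ∈ bicomp k 0 1 := by
  rw [cfY, C_mul', C_mul']
  exact add_mem (Submodule.smul_mem _ _ (X_mem_bicomp k 2 0 1 (by simp) (by simp)))
    (Submodule.smul_mem _ _ (X_mem_bicomp k 3 0 1 (by simp) (by simp)))

lemma eval_cfX (P : P1 k × P1 k) (A : P1 k) (h : P.1 = A) : eval (vec P) (cfX A) = 1 := by
  have hs := (exists_dual A).choose_spec
  simp [cfX, vec, h, hs]

lemma eval_cfY (P : P1 k × P1 k) (B : P1 k) (h : P.2 = B) : eval (vec P) (cfY B) = 1 := by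
  have hs := (exists_dual B).choose_spec
  simp [cfY, vec, h, hs]

lemma eval_lX (P : P1 k × P1 k) (A : P1 k) :
    eval (vec P) (lX k A) = A.rep 1 * P.1.rep 0 - A.rep 0 * P.1.rep 1 := by
  simp [lX, vec]

lemma eval_lY (P : P1 k × P1 k) (B : P1 k) :
    eval (vec P) (lY k B) = B.rep 1 * P.2.rep 0 - B.rep 0 * P.2.rep 1 := by
  simp [lY, vec]

/-- A `y`-form of degree `j` vanishing on ≥ j+1 points with pairwise distinct second
coordinates is zero. -/
lemma vanish_on_fiber (j : ℕ) : ∀ (T : Finset (P1 k × P1 k)),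
    (∀ P ∈ T, ∀ Q ∈ T, P ≠ Q → P.2 ≠ Q.2) →
    j + 1 ≤ T.card → ∀ {f : MvPolynomial (Fin 4) k}, f ∈ bicomp k 0 j →
    (∀ P ∈ T, eval (vec P) f = 0) → f = 0 := by
  induction j with
  | zero =>
    intro T hdist hcard f hf hv
    obtain ⟨P, hP⟩ := Finset.card_pos.mp (show 0 < T.card by omega)
    obtain ⟨r, rfl⟩ := bicomp00 hf
    have := hv P hP
    rw [eval_C] at this
    rw [this, C_0]
  | succ n ih =>
    intro T hdist hcard f hf hv
    obtain ⟨P₀, hP₀⟩ := Finset.card_pos.mp (show 0 < T.card by omega)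
    obtain ⟨g, hg, rfl⟩ := factor_lY P₀ n hf (hv P₀ hP₀)
    have hgz : g = 0 := by
      apply ih (T.erase P₀) _ (by rw [Finset.card_erase_of_mem hP₀]; omega) hg
      · intro Q hQ
        have hQT := Finset.mem_of_mem_erase hQ
        have hQne : Q ≠ P₀ := Finset.ne_of_mem_erase hQ
        have h2ne : P₀.2 ≠ Q.2 := hdist P₀ hP₀ Q hQT (Ne.symm hQne)
        have hlY : eval (vec Q) (lY k P₀.2) ≠ 0 := by
          rw [eval_lY]
          exact det_ne_zero_of_ne h2ne
        have := hv Q hQT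
        rw [map_mul] at this
        rcases mul_eq_zero.mp this with h' | h'
        · exact h'
        · exact absurd h' hlY
      · intro P hP Q hQ hne
        exact hdist P (Finset.mem_of_mem_erase hP) Q (Finset.mem_of_mem_erase hQ) hne
    rw [hgz, zero_mul]

/-- Lagrange interpolation on a fiber. -/
lemma lagrange_y (j : ℕ) (T : Finset (P1 k × P1 k))
    (hdist : ∀ P ∈ T, ∀ Q ∈ T, P ≠ Q → P.2 ≠ Q.2)
    (hcard : T.card ≤ j + 1) (P₀ : P1 k × P1 k) (hP₀ : P₀ ∈ T) :
    ∃ F ∈ bicomp k 0 j, eval (vec P₀) F = 1 ∧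
      ∀ Q ∈ T, Q ≠ P₀ → eval (vec Q) F = 0 := by
  classical
  set F₀ : MvPolynomial (Fin 4) k :=
    (∏ Q ∈ T.erase P₀, lY k Q.2) * (cfY P₀.2) ^ (j + 1 - T.card) with hF₀
  have hmem : F₀ ∈ bicomp k 0 j := by
    have h1 := bicomp_prod_y (T.erase P₀) (fun Q => lY k Q.2) (fun Q _ => lY_mem k Q.2)
    have h2 := bicomp_pow (cfY_mem P₀.2) (j + 1 - T.card)
    have h3 := bicomp_mul h1 h2
    rw [Finset.card_erase_of_mem hP₀] at h3
    have hc1 : 1 ≤ T.card := Finset.card_pos.mpr ⟨P₀, hP₀⟩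
    have : T.card - 1 + (j + 1 - T.card) = j := by omega
    simpa [this] using h3
  have hval : eval (vec P₀) F₀ = ∏ Q ∈ T.erase P₀, eval (vec P₀) (lY k Q.2) := by
    rw [hF₀, map_mul, map_pow, map_prod, eval_cfY P₀ P₀.2 rfl, one_pow, mul_one]
  have hne : eval (vec P₀) F₀ ≠ 0 := by
    rw [hval]
    apply Finset.prod_ne_zero_iff.mpr
    intro Q hQ
    rw [eval_lY]
    exact det_ne_zero_of_ne (hdist Q (Finset.mem_of_mem_erase hQ) P₀ hP₀
      (Finset.ne_of_mem_erase hQ))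
  refine ⟨C (eval (vec P₀) F₀)⁻¹ * F₀, ?_, ?_, ?_⟩
  · rw [C_mul']
    exact Submodule.smul_mem _ _ hmem
  · rw [map_mul, eval_C, inv_mul_cancel₀ hne]
  · intro Q hQ hQne
    rw [map_mul]
    apply mul_eq_zero_of_right
    rw [hF₀, map_mul, map_prod]
    apply mul_eq_zero_of_left
    apply Finset.prod_eq_zero (Finset.mem_erase.mpr ⟨hQne, hQ⟩)
    rw [eval_lY]
    show Q.2.rep 1 * Q.2.rep 0 - Q.2.rep 0 * Q.2.rep 1 = 0
    ring

/-- Lagrange interpolation across first coordinates. -/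
lemma lagrange_x (i : ℕ) (π : Finset (P1 k)) (hcard : π.card ≤ i + 1)
    (A : P1 k) (hA : A ∈ π) :
    ∃ F ∈ bicomp k i 0,
      (∀ P : P1 k × P1 k, P.1 = A → eval (vec P) F = 1) ∧
      (∀ P : P1 k × P1 k, P.1 ∈ π → P.1 ≠ A → eval (vec P) F = 0) := by
  classical
  set F₀ : MvPolynomial (Fin 4) k :=
    (∏ A' ∈ π.erase A, lX k A') * (cfX A) ^ (i + 1 - π.card) with hF₀
  have hmem : F₀ ∈ bicomp k i 0 := by
    have h1 := bicomp_prod_x (π.erase A) (fun A' => lX k A') (fun A' _ => lX_mem k A')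
    have h2 := bicomp_pow_x (cfX_mem A) (i + 1 - π.card)
    have h3 := bicomp_mul h1 h2
    rw [Finset.card_erase_of_mem hA] at h3
    have hc1 : 1 ≤ π.card := Finset.card_pos.mpr ⟨A, hA⟩
    have : π.card - 1 + (i + 1 - π.card) = i := by omega
    simpa [this] using h3
  -- the value at any point over A
  have hval : ∀ P : P1 k × P1 k, P.1 = A →
      eval (vec P) F₀ = ∏ A' ∈ π.erase A, (A'.rep 1 * A.rep 0 - A'.rep 0 * A.rep 1) := by
    intro P hP
    rw [hF₀, map_mul, map_pow, map_prod, eval_cfX P A hP, one_pow, mul_one]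
    apply Finset.prod_congr rfl
    intro A' _
    rw [eval_lX, hP]
  have hne : (∏ A' ∈ π.erase A, (A'.rep 1 * A.rep 0 - A'.rep 0 * A.rep 1)) ≠ 0 := by
    apply Finset.prod_ne_zero_iff.mpr
    intro A' hA'
    exact det_ne_zero_of_ne (Finset.ne_of_mem_erase hA')
  set w := ∏ A' ∈ π.erase A, (A'.rep 1 * A.rep 0 - A'.rep 0 * A.rep 1) with hw
  refine ⟨C w⁻¹ * F₀, ?_, ?_, ?_⟩
  · rw [C_mul']
    exact Submodule.smul_mem _ _ hmem
  · intro P hP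
    rw [map_mul, eval_C, hval P hP, inv_mul_cancel₀ hne]
  · intro P hP hPne
    rw [map_mul]
    apply mul_eq_zero_of_right
    rw [hF₀, map_mul, map_prod]
    apply mul_eq_zero_of_left
    apply Finset.prod_eq_zero (Finset.mem_erase.mpr ⟨hPne, hP⟩)
    rw [eval_lX]
    show P.1.rep 1 * P.1.rep 0 - P.1.rep 0 * P.1.rep 1 = 0
    ring

def evalLin (x : Fin 4 → k) : MvPolynomial (Fin 4) k →ₗ[k] k := (aeval x).toLinearMap

lemma evalLin_apply (x : Fin 4 → k) (f : MvPolynomial (Fin 4) k) :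
    evalLin x f = eval x f := by
  show aeval x f = eval x f
  rw [aeval_def, Algebra.algebraMap_self]; rfl

/-- Joint evaluation at all points of a finite set. -/
def Ev (T : Finset (P1 k × P1 k)) :
    MvPolynomial (Fin 4) k →ₗ[k] ((Q : ↥T) → k) :=
  LinearMap.pi (fun Q => evalLin (vec (Q : P1 k × P1 k)))

lemma Ev_apply (T : Finset (P1 k × P1 k)) (f : MvPolynomial (Fin 4) k) (Q : ↥T) :
    Ev T f Q = eval (vec (Q : P1 k × P1 k)) f := evalLin_apply _ _

lemma mem_IX_iff_of_bicomp {Xs : Finset (P1 k × P1 k)} {i j : ℕ} {f : MvPolynomial (Fin 4) k}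
    (hf : f ∈ bicomp k i j) :
    f ∈ IX k Xs ↔ ∀ P ∈ Xs, eval (vec P) f = 0 := by
  constructor
  · intro hmem P hP
    simp only [IX, Ideal.mem_iInf] at hmem
    exact eval_eq_zero_of_mem_pointIdeal (hmem P hP)
  · intro hv
    simp only [IX, Ideal.mem_iInf]
    intro P hP
    exact mem_pointIdeal_of_eval_zero P i j hf (hv P hP)

lemma ker_inf_bicomp (Xs : Finset (P1 k × P1 k)) (i j : ℕ) :
    (LinearMap.ker (Ev Xs)) ⊓ bicomp k i j =
      (Submodule.restrictScalars k (IX k Xs)) ⊓ bicomp k i j := by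
  ext f
  simp only [Submodule.mem_inf, LinearMap.mem_ker, Submodule.restrictScalars_mem]
  constructor
  · rintro ⟨h0, hb⟩
    refine ⟨(mem_IX_iff_of_bicomp hb).mpr ?_, hb⟩
    intro P hP
    have := congrFun h0 (⟨P, hP⟩ : ↥Xs)
    rwa [Ev_apply] at this
  · rintro ⟨hIX, hb⟩
    refine ⟨?_, hb⟩
    funext Q
    rw [Ev_apply]
    exact (mem_IX_iff_of_bicomp hb).mp hIX Q.1 Q.2

set_option maxHeartbeats 1000000 in
set_option synthInstance.maxHeartbeats 1000000 in
lemma finrank_bicomp_split (Xs : Finset (P1 k × P1 k)) (i j : ℕ) :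
    Module.finrank k (bicomp k i j) =
      Module.finrank k (Submodule.map (Ev Xs) (bicomp k i j)) +
      Module.finrank k
        ((Submodule.restrictScalars k (IX k Xs)) ⊓ bicomp k i j :
          Submodule k (MvPolynomial (Fin 4) k)) := by
  classical
  set E' := (Ev Xs).comp (bicomp k i j).subtype with hE'
  have hrange : LinearMap.range E' = Submodule.map (Ev Xs) (bicomp k i j) := by
    rw [hE', LinearMap.range_comp, Submodule.range_subtype]
  have hker : LinearMap.ker E' =
      Submodule.comap (bicomp k i j).subtype
        ((LinearMap.ker (Ev Xs)) ⊓ bicomp k i j) := by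
    rw [hE', LinearMap.ker_comp]
    ext x
    simp only [Submodule.mem_comap, Submodule.mem_inf, LinearMap.mem_ker,
      Submodule.coe_subtype]
    exact ⟨fun h => ⟨h, x.2⟩, fun h => h.1⟩
  have hequiv := Submodule.comapSubtypeEquivOfLe
    (inf_le_right : (LinearMap.ker (Ev Xs)) ⊓ bicomp k i j ≤ bicomp k i j)
  have h1 := LinearMap.finrank_range_add_finrank_ker E'
  rw [hrange, hker] at h1
  rw [← h1]
  have h2 : Module.finrank k
      ↥(Submodule.comap (bicomp k i j).subtype (LinearMap.ker (Ev Xs) ⊓ bicomp k i j)) =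
      Module.finrank k
        ↥((Submodule.restrictScalars k (IX k Xs)) ⊓ bicomp k i j) := by
    rw [hequiv.finrank_eq, ker_inf_bicomp]
  rw [h2]


/-- The fiber of `Xs` over `A`. -/
def fiber (Xs : Finset (P1 k × P1 k)) (A : P1 k) : Finset (P1 k × P1 k) :=
  Xs.filter (fun P => P.1 = A)

lemma alphaA_eq_card_fiber (Xs : Finset (P1 k × P1 k)) (A : P1 k) :
    alphaA k Xs A = (fiber Xs A).card := rfl

lemma fiber_dist (Xs : Finset (P1 k × P1 k)) (A : P1 k) :
    ∀ P ∈ fiber Xs A, ∀ Q ∈ fiber Xs A, P ≠ Q → P.2 ≠ Q.2 := by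
  intro P hP Q hQ hne h2
  apply hne
  have h1 : P.1 = A := (Finset.mem_filter.mp hP).2
  have h1' : Q.1 = A := (Finset.mem_filter.mp hQ).2
  exact Prod.ext (h1.trans h1'.symm) h2

/-- Restriction of functions on `Xs` to a fiber. -/
def resA (Xs : Finset (P1 k × P1 k)) (A : P1 k) :
    ((↥Xs) → k) →ₗ[k] ((↥(fiber Xs A)) → k) :=
  LinearMap.funLeft k k (fun Q => ⟨Q.1, (Finset.mem_filter.mp Q.2).1⟩)

lemma resA_apply (Xs : Finset (P1 k × P1 k)) (A : P1 k) (φ : ↥Xs → k)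
    (Q : ↥(fiber Xs A)) :
    resA Xs A φ Q = φ ⟨Q.1, (Finset.mem_filter.mp Q.2).1⟩ := rfl

set_option maxHeartbeats 1000000 in
lemma finrank_uA (Xs : Finset (P1 k × P1 k)) (A : P1 k) (j : ℕ) :
    Module.finrank k (Submodule.map (Ev (fiber Xs A)) (bicomp k 0 j)) =
      min (alphaA k Xs A) (j+1) := by
  classical
  set T := fiber Xs A with hT
  have hdist := fiber_dist Xs A
  set D := (Ev T).comp (bicomp k 0 j).subtype with hD
  have hrange : LinearMap.range D = Submodule.map (Ev T) (bicomp k 0 j) := by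
    rw [hD, LinearMap.range_comp, Submodule.range_subtype]
  have hrn := LinearMap.finrank_range_add_finrank_ker D
  rw [hrange] at hrn
  have hdim : Module.finrank k (bicomp k 0 j) = j + 1 := by
    rw [finrank_bicomp]; ring
  rw [hdim] at hrn
  rw [alphaA_eq_card_fiber, ← hT]
  rcases le_or_gt (j+1) T.card with hc | hc
  · have hker : LinearMap.ker D = ⊥ := by
      rw [LinearMap.ker_eq_bot']
      intro g hg
      have hz : (g : MvPolynomial (Fin 4) k) = 0 := by
        apply vanish_on_fiber j T hdist hc g.2
        intro P hP
        have := congrFun hg (⟨P, hP⟩ : ↥T)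
        rw [hD] at this
        rw [← Ev_apply T _ (⟨P, hP⟩ : ↥T)]
        exact this
      exact Subtype.ext hz
    rw [hker, finrank_bot] at hrn
    rw [min_eq_right hc]
    omega
  · have hsurj : Submodule.map (Ev T) (bicomp k 0 j) = ⊤ := by
      rw [Submodule.eq_top_iff']
      intro φ
      have hsingle : ∀ P₀ : ↥T, (Pi.single P₀ (1:k) : ↥T → k) ∈
          Submodule.map (Ev T) (bicomp k 0 j) := by
        intro P₀
        obtain ⟨F, hFmem, hF1, hF0⟩ := lagrange_y j T hdist (by omega) P₀ P₀.2
        refine ⟨F, hFmem, ?_⟩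
        funext Q
        rw [Ev_apply]
        by_cases hQ : Q = P₀
        · rw [hQ, Pi.single_eq_same]
          exact hF1
        · rw [Pi.single_eq_of_ne hQ]
          exact hF0 Q.1 Q.2 (fun h => hQ (Subtype.ext h))
      have hrep : φ = ∑ P₀ : ↥T, φ P₀ • (Pi.single P₀ (1:k) : ↥T → k) := by
        have h0 : ∑ P₀ : ↥T, φ P₀ • (Pi.single P₀ (1:k) : ↥T → k)
            = ∑ P₀ : ↥T, Pi.single P₀ (φ P₀) := by
          apply Finset.sum_congr rfl
          intro P₀ _
          rw [show φ P₀ • (Pi.single P₀ (1:k) : ↥T → k) = Pi.single P₀ (φ P₀ • (1:k)) from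
            (Pi.single_smul P₀ (φ P₀) 1).symm, smul_eq_mul, mul_one]
        rw [h0, Finset.univ_sum_single]
      rw [hrep]
      exact Submodule.sum_mem _ (fun P₀ _ => Submodule.smul_mem _ _ (hsingle P₀))
    rw [hsurj, finrank_top, Module.finrank_fintype_fun_eq_card, Fintype.card_coe,
      min_eq_left (by omega)]

/-- Partial evaluation of the `x`-variables at `A`. -/
def pev (A : P1 k) : MvPolynomial (Fin 4) k →ₐ[k] MvPolynomial (Fin 4) k :=
  aeval ![C (A.rep 0), C (A.rep 1), X 2, X 3]

lemma pev_mem {i j : ℕ} (A : P1 k) {f : MvPolynomial (Fin 4) k}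
    (hf : f ∈ bicomp k i j) : pev A f ∈ bicomp k 0 j := by
  have hle : Submodule.map (pev A).toLinearMap (bicomp k i j) ≤ bicomp k 0 j := by
    rw [bicomp, Submodule.map_span, Submodule.span_le]
    rintro _ ⟨_, ⟨m, h1, h2, rfl⟩, rfl⟩
    show (pev A) (monomial m 1) ∈ (bicomp k 0 j : Set (MvPolynomial (Fin 4) k))
    rw [pev]
    rw [aeval_monomial, map_one, one_mul,
      Finsupp.prod_fintype _ _ (fun n => pow_zero _), Fin.prod_univ_four]
    simp only [Matrix.cons_val_zero, Matrix.cons_val_one, Matrix.head_cons,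
      Matrix.cons_val_two, Matrix.tail_cons, Matrix.cons_val_three]
    rw [← C_pow, ← C_pow, ← C_mul, X_pow_eq_monomial, X_pow_eq_monomial,
      mul_assoc, monomial_mul, one_mul, C_mul']
    apply Submodule.smul_mem
    apply Submodule.subset_span
    refine ⟨_, ?_, ?_, rfl⟩
    · simp [Finsupp.single_apply]
    · simp [Finsupp.single_apply]
      omega
  exact hle ⟨f, hf, rfl⟩

lemma eval_pev (Q : P1 k × P1 k) (A : P1 k) (h : Q.1 = A) (f : MvPolynomial (Fin 4) k) :
    eval (vec Q) (pev A f) = eval (vec Q) f := by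
  induction f using MvPolynomial.induction_on with
  | C r => simp [pev]
  | add p q hp hq => rw [map_add, map_add, map_add, hp, hq]
  | mul_X p n ih =>
    rw [map_mul, map_mul, map_mul, ih]
    congr 1
    rw [eval_X]
    fin_cases n <;> simp [pev, vec, h]


/-- Functions on `Xs` vanishing on a given predicate. -/
def vanishOn (T : Finset (P1 k × P1 k)) (p : ↥T → Prop) : Submodule k (↥T → k) where
  carrier := {φ | ∀ Q, p Q → φ Q = 0}
  add_mem' := by intro a b ha hb Q hQ; simp only [Pi.add_apply, ha Q hQ, hb Q hQ, add_zero]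
  zero_mem' := by intro Q _; rfl
  smul_mem' := by intro c φ hφ Q hQ; simp only [Pi.smul_apply, hφ Q hQ, smul_zero]

lemma mem_vanishOn {T : Finset (P1 k × P1 k)} {p : ↥T → Prop} {φ : ↥T → k} :
    φ ∈ vanishOn T p ↔ ∀ Q, p Q → φ Q = 0 := Iff.rfl

set_option maxHeartbeats 1000000 in
lemma finrank_WA (Xs : Finset (P1 k × P1 k)) (j : ℕ) (A : P1 k)
    (F : MvPolynomial (Fin 4) k)
    (hF1 : ∀ P : P1 k × P1 k, P.1 = A → eval (vec P) F = 1)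
    (hF0 : ∀ P : P1 k × P1 k, P.1 ∈ pi1 k Xs → P.1 ≠ A → eval (vec P) F = 0) :
    Module.finrank k
        (Submodule.map (Ev Xs) (Submodule.map (LinearMap.mulLeft k F) (bicomp k 0 j)))
      = Module.finrank k (Submodule.map (Ev (fiber Xs A)) (bicomp k 0 j)) := by
  classical
  set W := Submodule.map (Ev Xs) (Submodule.map (LinearMap.mulLeft k F) (bicomp k 0 j)) with hW
  set R := (resA Xs A).comp W.subtype with hRdef
  have hvalfib : ∀ (g : MvPolynomial (Fin 4) k) (Q : ↥(fiber Xs A)),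
      eval (vec (Q : P1 k × P1 k)) (F * g) = eval (vec (Q : P1 k × P1 k)) g := by
    intro g Q
    rw [map_mul, hF1 _ (Finset.mem_filter.mp Q.2).2, one_mul]
  have hvan : ∀ φ ∈ W, ∀ Q : ↥Xs, (Q : P1 k × P1 k).1 ≠ A → φ Q = 0 := by
    rintro φ ⟨_, ⟨g, hg, rfl⟩, rfl⟩ Q hQ
    rw [Ev_apply]
    show eval (vec (Q : P1 k × P1 k)) (F * g) = 0
    rw [map_mul, hF0 Q (Finset.mem_image_of_mem Prod.fst Q.2) hQ, zero_mul]
  have hker : LinearMap.ker R = ⊥ := by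
    rw [LinearMap.ker_eq_bot']
    intro w hw
    apply Subtype.ext
    funext Q
    by_cases hQ : (Q : P1 k × P1 k).1 = A
    · have hQf : (Q : P1 k × P1 k) ∈ fiber Xs A := Finset.mem_filter.mpr ⟨Q.2, hQ⟩
      have h1 := congrFun hw (⟨(Q : P1 k × P1 k), hQf⟩ : ↥(fiber Xs A))
      have h2 : R w ⟨(Q : P1 k × P1 k), hQf⟩ = (w : ↥Xs → k) Q := by
        show (w : ↥Xs → k) _ = (w : ↥Xs → k) Q
        congr 1
      rw [h2] at h1
      exact h1
    · exact hvan w.1 w.2 Q hQ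
  have hrange : LinearMap.range R = Submodule.map (Ev (fiber Xs A)) (bicomp k 0 j) := by
    apply le_antisymm
    · rintro _ ⟨w, rfl⟩
      obtain ⟨u, ⟨g, hg, rfl⟩, hwv⟩ := w.2
      refine ⟨g, hg, ?_⟩
      funext Q
      rw [Ev_apply]
      have h2 : R w Q = (w : ↥Xs → k) ⟨(Q : P1 k × P1 k), (Finset.mem_filter.mp Q.2).1⟩ := rfl
      rw [h2, ← hwv]
      show eval (vec (Q : P1 k × P1 k)) g = Ev Xs (LinearMap.mulLeft k F g) _
      rw [Ev_apply]
      show eval (vec (Q : P1 k × P1 k)) g = eval (vec (Q : P1 k × P1 k)) (F * g)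
      rw [hvalfib g Q]
    · rintro _ ⟨g, hg, rfl⟩
      have hmem : Ev Xs (F * g) ∈ W := ⟨F * g, ⟨g, hg, rfl⟩, rfl⟩
      refine ⟨⟨Ev Xs (F * g), hmem⟩, ?_⟩
      funext Q
      have h2 : R ⟨Ev Xs (F * g), hmem⟩ Q =
          Ev Xs (F * g) ⟨(Q : P1 k × P1 k), (Finset.mem_filter.mp Q.2).1⟩ := rfl
      rw [h2, Ev_apply, Ev_apply]
      exact hvalfib g Q
  have hrn := LinearMap.finrank_range_add_finrank_ker R
  rw [hker, finrank_bot, hrange, add_zero] at hrn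
  exact hrn.symm

set_option maxHeartbeats 1000000 in
lemma finrank_map_Ev (Xs : Finset (P1 k × P1 k)) (i j : ℕ)
    (hi : (pi1 k Xs).card ≤ i + 1) :
    Module.finrank k (Submodule.map (Ev Xs) (bicomp k i j)) =
      ∑ A ∈ pi1 k Xs, min (alphaA k Xs A) (j+1) := by
  classical
  have hch : ∀ A ∈ pi1 k Xs, ∃ F, F ∈ bicomp k i 0 ∧
      (∀ P : P1 k × P1 k, P.1 = A → eval (vec P) F = 1) ∧
      (∀ P : P1 k × P1 k, P.1 ∈ pi1 k Xs → P.1 ≠ A → eval (vec P) F = 0) := by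
    intro A hA
    obtain ⟨F, h1, h2, h3⟩ := lagrange_x i (pi1 k Xs) hi A hA
    exact ⟨F, h1, h2, fun P hP hne => h3 P hP hne⟩
  choose! F hFb hF1 hF0 using hch
  set WA : P1 k → Submodule k (↥Xs → k) := fun A =>
    Submodule.map (Ev Xs) (Submodule.map (LinearMap.mulLeft k (F A)) (bicomp k 0 j)) with hWA
  -- the image is the (finite) sup of the `WA`
  have hsup : Submodule.map (Ev Xs) (bicomp k i j) = (pi1 k Xs).sup WA := by
    apply le_antisymm
    · rintro _ ⟨f, hf, rfl⟩
      have hsum : Ev Xs f = ∑ A ∈ pi1 k Xs, Ev Xs (F A * pev A f) := by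
        funext Q
        rw [Finset.sum_apply, Ev_apply]
        have hA₀ : (Q : P1 k × P1 k).1 ∈ pi1 k Xs := Finset.mem_image_of_mem Prod.fst Q.2
        rw [Finset.sum_eq_single_of_mem (Q : P1 k × P1 k).1 hA₀]
        · rw [Ev_apply, map_mul, hF1 _ hA₀ _ rfl, one_mul, eval_pev _ _ rfl]
        · intro A hA hne
          rw [Ev_apply, map_mul, hF0 A hA _ hA₀ (Ne.symm hne), zero_mul]
      rw [hsum]
      apply Submodule.sum_mem
      intro A hA
      have : Ev Xs (F A * pev A f) ∈ WA A :=
        ⟨F A * pev A f, ⟨pev A f, pev_mem A hf, rfl⟩, rfl⟩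
      exact (Finset.le_sup hA : WA A ≤ (pi1 k Xs).sup WA) this
    · apply Finset.sup_le
      intro A hA
      rintro _ ⟨_, ⟨g, hg, rfl⟩, rfl⟩
      refine ⟨F A * g, ?_, rfl⟩
      have := bicomp_mul (hFb A hA) hg
      simpa using this
  -- dimension of the sup is the sum of dimensions
  have hdisj : ∀ (s : Finset (P1 k)), s ⊆ pi1 k Xs →
      Module.finrank k ↥(s.sup WA) = ∑ A ∈ s, Module.finrank k ↥(WA A) := by
    intro s
    induction s using Finset.induction_on with
    | empty => intro _; simp
    | insert a s hnot ih =>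
      intro hsub
      have ha : a ∈ pi1 k Xs := hsub (Finset.mem_insert_self a s)
      have hsub' : s ⊆ pi1 k Xs := fun x hx => hsub (Finset.mem_insert_of_mem hx)
      rw [Finset.sup_insert, Finset.sum_insert hnot, ← ih hsub']
      have hWAa : WA a ≤ vanishOn Xs (fun Q => (Q : P1 k × P1 k).1 ≠ a) := by
        rintro _ ⟨_, ⟨g, hg, rfl⟩, rfl⟩ Q hQ
        rw [Ev_apply]
        show eval (vec (Q : P1 k × P1 k)) (F a * g) = 0
        rw [map_mul, hF0 a ha _ (Finset.mem_image_of_mem Prod.fst Q.2) hQ, zero_mul]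
      have hrest : s.sup WA ≤ vanishOn Xs (fun Q => (Q : P1 k × P1 k).1 = a) := by
        apply Finset.sup_le
        intro A hA
        rintro _ ⟨_, ⟨g, hg, rfl⟩, rfl⟩ Q hQ
        rw [Ev_apply]
        show eval (vec (Q : P1 k × P1 k)) (F A * g) = 0
        rw [map_mul, hF0 A (hsub' hA) _ (Finset.mem_image_of_mem Prod.fst Q.2)
          (by rw [hQ]; exact fun h => hnot (h ▸ hA)), zero_mul]
      have hinf : WA a ⊓ s.sup WA = ⊥ := by
        rw [eq_bot_iff]
        rintro φ ⟨h1, h2⟩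
        have hv1 := hWAa h1
        have hv2 := hrest h2
        rw [Submodule.mem_bot]
        funext Q
        by_cases hQ : (Q : P1 k × P1 k).1 = a
        · exact hv2 Q hQ
        · exact hv1 Q hQ
      have := Submodule.finrank_sup_add_finrank_inf_eq (WA a) (s.sup WA)
      rw [hinf, finrank_bot, add_zero] at this
      exact this
  rw [hsup, hdisj (pi1 k Xs) le_rfl]
  apply Finset.sum_congr rfl
  intro A hA
  rw [hWA]
  rw [finrank_WA Xs j A (F A) (hF1 A hA) (hF0 A hA), finrank_uA]


lemma wc_self {i j : ℕ} {f : MvPolynomial (Fin 4) k} (hf : f ∈ bicomp k i j) :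
    wc k (i, j) f = f := by
  rw [bicomp_eq_whs, mem_weightedHomogeneousSubmodule] at hf
  exact hf.weightedHomogeneousComponent_same

lemma J_eq_zero (Xs : Finset (P1 k × P1 k)) (L : MvPolynomial (Fin 4) k)
    (hL : L ∈ bicomp k 0 1) (i : ℕ) :
    (Submodule.restrictScalars k (IX k Xs ⊔ Ideal.span {L})) ⊓ bicomp k i 0
      = (Submodule.restrictScalars k (IX k Xs)) ⊓ bicomp k i 0 := by
  apply le_antisymm
  · rintro f hf
    obtain ⟨hfI, hfb⟩ := Submodule.mem_inf.mp hf
    have hfI' : f ∈ IX k Xs ⊔ Ideal.span {L} := hfI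
    obtain ⟨g, hg, e, he, hsum⟩ := Submodule.mem_sup.mp hfI'
    obtain ⟨h, rfl⟩ := Ideal.mem_span_singleton'.mp he
    apply Submodule.mem_inf.mpr
    refine ⟨?_, hfb⟩
    show f ∈ IX k Xs
    have h1 : wc k (i, 0) f = f := wc_self hfb
    have h2 : wc k (i, 0) f = wc k (i, 0) g + wc k (i, 0) (h * L) := by
      rw [← map_add, hsum]
    rw [wc_mul_y0 k i L h hL, add_zero] at h2
    rw [← h1, h2]
    exact IX_homog Xs (i, 0) g hg
  · rintro f hf
    obtain ⟨hfI, hfb⟩ := Submodule.mem_inf.mp hf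
    apply Submodule.mem_inf.mpr
    exact ⟨Ideal.mem_sup_left (hfI : f ∈ IX k Xs), hfb⟩

lemma J_eq_succ (Xs : Finset (P1 k × P1 k)) (L : MvPolynomial (Fin 4) k)
    (hL : L ∈ bicomp k 0 1) (i j : ℕ) :
    (Submodule.restrictScalars k (IX k Xs ⊔ Ideal.span {L})) ⊓ bicomp k i (j+1)
      = ((Submodule.restrictScalars k (IX k Xs)) ⊓ bicomp k i (j+1))
          ⊔ Submodule.map (LinearMap.mulRight k L) (bicomp k i j) := by
  apply le_antisymm
  · rintro f hf
    obtain ⟨hfI, hfb⟩ := Submodule.mem_inf.mp hf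
    have hfI' : f ∈ IX k Xs ⊔ Ideal.span {L} := hfI
    obtain ⟨g, hg, e, he, hsum⟩ := Submodule.mem_sup.mp hfI'
    obtain ⟨h, rfl⟩ := Ideal.mem_span_singleton'.mp he
    have h1 : wc k (i, j+1) f = f := wc_self hfb
    have h2 : wc k (i, j+1) f = wc k (i, j+1) g + wc k (i, j) h * L := by
      rw [← wc_mul_y k i j L h hL, ← map_add, hsum]
    apply Submodule.mem_sup.mpr
    refine ⟨wc k (i, j+1) g, Submodule.mem_inf.mpr ⟨?_, ?_⟩,
      wc k (i, j) h * L, ⟨wc k (i, j) h, ?_, rfl⟩, ?_⟩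
    · exact (IX_homog Xs (i, j+1) g hg : wc k (i,j+1) g ∈ IX k Xs)
    · rw [bicomp_eq_whs]
      exact weightedHomogeneousComponent_mem wt g (i, j+1)
    · rw [bicomp_eq_whs]
      exact weightedHomogeneousComponent_mem wt h (i, j)
    · rw [← h2, h1]
  · apply sup_le
    · rintro f hf
      obtain ⟨hfI, hfb⟩ := Submodule.mem_inf.mp hf
      apply Submodule.mem_inf.mpr
      exact ⟨Ideal.mem_sup_left (hfI : f ∈ IX k Xs), hfb⟩
    · rintro _ ⟨h, hh', rfl⟩
      have hh : h ∈ bicomp k i j := hh'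
      apply Submodule.mem_inf.mpr
      refine ⟨?_, ?_⟩
      · exact (Ideal.mem_sup_right (Ideal.mul_mem_left _ h (Ideal.subset_span rfl)) :
          h * L ∈ IX k Xs ⊔ Ideal.span {L})
      · have := bicomp_mul hh hL
        simpa using this

set_option maxHeartbeats 2000000 in
set_option synthInstance.maxHeartbeats 1000000 in
/-- If `L` is a bihomogeneous form of degree `(0,1)` whose image in `S/I_X`
is a non-zero-divisor, then for all `i ≥ |π₁(X)| − 1` and all `j ≥ 0`,
`H_{S/(I_X + ⟨L⟩)}(i,j) = #{A ∈ π₁(X) : α_A ≥ j+1}`. -/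
theorem stmt6 [CharZero k] (Xs : Finset (P1 k × P1 k)) (L : MvPolynomial (Fin 4) k)
    (hL : L ∈ bicomp k 0 1)
    (hnzd : Ideal.Quotient.mk (IX k Xs) L ∈
      nonZeroDivisors (MvPolynomial (Fin 4) k ⧸ IX k Xs))
    (i j : ℕ) (hi : (pi1 k Xs).card ≤ i + 1) :
    hilb k (IX k Xs ⊔ Ideal.span {L}) i j =
      (((pi1 k Xs).filter (fun A => j + 1 ≤ alphaA k Xs A)).card : ℤ) := by
  classical
  by_cases hXe : Xs = ∅
  · subst hXe
    have hIXtop : IX k (∅ : Finset (P1 k × P1 k)) = ⊤ := by simp [IX]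
    have hpi : pi1 k (∅ : Finset (P1 k × P1 k)) = ∅ := rfl
    rw [hpi]
    simp only [Finset.filter_empty, Finset.card_empty, Nat.cast_zero]
    rw [hilb, hIXtop, top_sup_eq, Submodule.restrictScalars_top, top_inf_eq, sub_self]
  · have hne : Xs.Nonempty := Finset.nonempty_iff_ne_empty.mpr hXe
    have hIXneTop : IX k Xs ≠ ⊤ := by
      obtain ⟨P, hP⟩ := hne
      intro htop
      have h1 : (1 : MvPolynomial (Fin 4) k) ∈ IX k Xs := by rw [htop]; trivial
      simp only [IX, Ideal.mem_iInf] at h1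
      have h2 := eval_eq_zero_of_mem_pointIdeal (h1 P hP)
      rw [map_one] at h2
      exact one_ne_zero h2
    haveI := Ideal.Quotient.nontrivial_iff.mpr hIXneTop
    have hLne : L ≠ 0 := by
      intro h0
      have h1 : (1 : MvPolynomial (Fin 4) k ⧸ IX k Xs) * Ideal.Quotient.mk (IX k Xs) L = 0 := by
        rw [h0, map_zero, mul_zero]
      exact one_ne_zero (hnzd.2 1 h1)
    have hnz : ∀ h : MvPolynomial (Fin 4) k, h * L ∈ IX k Xs → h ∈ IX k Xs := by
      intro h hh
      have h1 : Ideal.Quotient.mk (IX k Xs) h * Ideal.Quotient.mk (IX k Xs) L = 0 := by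
        rw [← map_mul, Ideal.Quotient.eq_zero_iff_mem]; exact hh
      have h2 := hnzd.2 _ h1
      rwa [Ideal.Quotient.eq_zero_iff_mem] at h2
    have hinj : Function.Injective (LinearMap.mulRight k L) := by
      intro a b hab
      exact mul_left_injective₀ hLne (hab : a * L = b * L)
    have halpha : ∀ A ∈ pi1 k Xs, 1 ≤ alphaA k Xs A := by
      intro A hA
      obtain ⟨P, hP, rfl⟩ := Finset.mem_image.mp hA
      exact Finset.card_pos.mpr ⟨P, Finset.mem_filter.mpr ⟨hP, rfl⟩⟩
    cases j with
    | zero =>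
      rw [hilb, J_eq_zero Xs L hL i]
      have h1 := finrank_bicomp_split Xs i 0
      have h2 := finrank_map_Ev Xs i 0 hi
      have h3 : ∑ A ∈ pi1 k Xs, min (alphaA k Xs A) (0+1) = (pi1 k Xs).card := by
        rw [Finset.card_eq_sum_ones]
        apply Finset.sum_congr rfl
        intro A hA
        exact min_eq_right (halpha A hA)
      have h4 : (pi1 k Xs).filter (fun A => 0 + 1 ≤ alphaA k Xs A) = pi1 k Xs :=
        Finset.filter_true_of_mem (fun A hA => halpha A hA)
      rw [h4]
      rw [h2, h3] at h1
      set b0 := Module.finrank k (bicomp k i 0) with hb0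
      set k0 := Module.finrank k
        ((Submodule.restrictScalars k (IX k Xs)) ⊓ bicomp k i 0 :
          Submodule k (MvPolynomial (Fin 4) k)) with hk0
      set c := (pi1 k Xs).card with hc
      omega
    | succ j' =>
      rw [hilb, J_eq_succ Xs L hL i j']
      set Kb := (Submodule.restrictScalars k (IX k Xs)) ⊓ bicomp k i (j'+1) with hKb
      set Ka := (Submodule.restrictScalars k (IX k Xs)) ⊓ bicomp k i j' with hKa
      set W := Submodule.map (LinearMap.mulRight k L) (bicomp k i j') with hW
      haveI : FiniteDimensional k Kb := Submodule.finiteDimensional_of_le inf_le_right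
      haveI : FiniteDimensional k Ka := Submodule.finiteDimensional_of_le inf_le_right
      have eW : (bicomp k i j') ≃ₗ[k] W :=
        Submodule.equivMapOfInjective (LinearMap.mulRight k L) hinj (bicomp k i j')
      haveI : FiniteDimensional k W := Module.Finite.equiv eW
      have hWrank : Module.finrank k W = Module.finrank k (bicomp k i j') := eW.finrank_eq.symm
      have hKW : Kb ⊓ W = Submodule.map (LinearMap.mulRight k L) Ka := by
        apply le_antisymm
        · rintro φ ⟨h1, h2⟩
          obtain ⟨h, hh, rfl⟩ := h2
          obtain ⟨hI, hb⟩ := Submodule.mem_inf.mp h1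
          refine ⟨h, Submodule.mem_inf.mpr ⟨?_, hh⟩, rfl⟩
          exact (hnz h (hI : h * L ∈ IX k Xs) : h ∈ IX k Xs)
        · rintro _ ⟨h, hh, rfl⟩
          obtain ⟨hI, hb⟩ := Submodule.mem_inf.mp hh
          refine Submodule.mem_inf.mpr ⟨Submodule.mem_inf.mpr ⟨?_, ?_⟩, ⟨h, hb, rfl⟩⟩
          · exact (Ideal.mul_mem_right L _ (hI : h ∈ IX k Xs) :
              h * L ∈ IX k Xs)
          · show h * L ∈ bicomp k i (j'+1)
            have := bicomp_mul hb hL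
            simpa using this
      have eKa : Ka ≃ₗ[k] Submodule.map (LinearMap.mulRight k L) Ka :=
        Submodule.equivMapOfInjective (LinearMap.mulRight k L) hinj Ka
      have hKWrank : Module.finrank k (Kb ⊓ W : Submodule k (MvPolynomial (Fin 4) k))
          = Module.finrank k Ka := by
        rw [hKW]
        exact eKa.finrank_eq.symm
      have hsupinf := Submodule.finrank_sup_add_finrank_inf_eq Kb W
      rw [hKWrank, hWrank] at hsupinf
      have h1 := finrank_bicomp_split Xs i (j'+1)
      have h2 := finrank_bicomp_split Xs i j'
      have hN2 := finrank_map_Ev Xs i (j'+1) hi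
      have hN1 := finrank_map_Ev Xs i j' hi
      have hcount : (((pi1 k Xs).filter (fun A => j' + 1 + 1 ≤ alphaA k Xs A)).card : ℤ)
          = (∑ A ∈ pi1 k Xs, min (alphaA k Xs A) (j'+1+1) : ℕ)
            - (∑ A ∈ pi1 k Xs, min (alphaA k Xs A) (j'+1) : ℕ) := by
        rw [Nat.cast_sum, Nat.cast_sum, ← Finset.sum_sub_distrib,
          Finset.natCast_card_filter]
        apply Finset.sum_congr rfl
        intro A _
        by_cases hA : j' + 1 + 1 ≤ alphaA k Xs A
        · rw [if_pos hA, min_eq_right hA, min_eq_right (by omega)]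
          push_cast
          ring
        · rw [if_neg hA, min_eq_left (by omega), min_eq_left (by omega), sub_self]
      rw [← hN2, ← hN1] at hcount
      set c := ((pi1 k Xs).filter (fun A => j' + 1 + 1 ≤ alphaA k Xs A)).card with hc
      set bb := Module.finrank k (bicomp k i (j'+1)) with hbb
      set ba := Module.finrank k (bicomp k i j') with hba
      set nb := Module.finrank k (Submodule.map (Ev Xs) (bicomp k i (j'+1))) with hnb
      set na := Module.finrank k (Submodule.map (Ev Xs) (bicomp k i j')) with hna
      set kb := Module.finrank k Kb with hkb
      set ka := Module.finrank k Ka with hka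
      set sup := Module.finrank k (Kb ⊔ W : Submodule k (MvPolynomial (Fin 4) k)) with hsup
      omega


end
end

section
/- Let X be a finite set of distinct points in ℙ¹ × ℙ¹ over a field k such that no point of X has second coordinate [0:1], with π₁(X) = {A₁, …, A_ℓ} and α_k = α_{A_k}. Then for every a ∈ ℕ, there is an inclusion of ideals ⟨I_X ∩ ⟨x₀,x₁⟩ᵃ, y₀⟩ ⊆ ⋂_{k=1}^{ℓ} ⟨y₀, y₁^{α_k}, L_{A_k}⟩ ∩ ⟨⟨x₀,x₁⟩ᵃ, y₀⟩, where L_{A_k} = a_{k,1}x₀ − a_{k,0}x₁ if A_k = [a_{k,0}:a_{k,1}]. -/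
open MvPolynomial
open scoped Classical

noncomputable section

variable (k : Type) [Field k]

/- Fix `A ∈ π₁(X)` and let `τ` be the substitution of one of `x₀, x₁` that kills `L_A` and fixes
`y₀, y₁`, so that `f ≡ τ f` modulo `L_A`. For every point `(A, B)` of `X`, `τ` maps `I_X` into
`⟨L_B⟩` with `L_B = b₁y₀ - b₀y₁`. These `α_A` linear forms are primes, pairwise non-associate since
the `B` are distinct, so their product divides `τ f`; being a product of `α_A` elements of
`⟨y₀, y₁⟩`, it lies in `⟨y₀, y₁⟩^{α_A} ⊆ ⟨y₀, y₁^{α_A}⟩`. -/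

namespace MvPolynomial

variable {σ R K : Type*} [CommRing R] [Field K] [DecidableEq σ]

theorem sub_aeval_update_X_mem_span (i : σ) (g f : MvPolynomial σ R) :
    f - aeval (Function.update X i g) f ∈ Ideal.span {X i - g} := by
  induction f using MvPolynomial.induction_on with
  | C a => simp
  | add p q hp hq => simpa [add_sub_add_comm] using Ideal.add_mem _ hp hq
  | mul_X p m hp =>
    have hsplit : p * X m - aeval (Function.update X i g) (p * X m) =
        p * (X m - Function.update X i g m) + (p - aeval (Function.update X i g) p) *
          Function.update X i g m := by
      simp only [map_mul, aeval_X]; ring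
    rw [hsplit]
    refine Ideal.add_mem _ (Ideal.mul_mem_left _ _ ?_) (Ideal.mul_mem_right _ _ hp)
    rcases eq_or_ne m i with rfl | hm
    · rw [Function.update_self]
      exact Ideal.subset_span rfl
    · simp [hm]

private theorem exists_algHom_map_linear_eq_zero_of_ne_zero {i j : σ} (hij : i ≠ j) {a : K} (b : K)
    (ha : a ≠ 0) :
    ∃ τ : MvPolynomial σ K →ₐ[K] MvPolynomial σ K, τ (C a * X i - C b * X j) = 0 ∧
      (∀ f, f - τ f ∈ Ideal.span {C a * X i - C b * X j}) ∧
      ∀ m, m ≠ i → τ (X m) = X m := by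
  have hℓ : C a * X i - C b * X j = C a * (X i - C (b / a) * X j : MvPolynomial σ K) := by
    rw [mul_sub, ← mul_assoc, ← C_mul, mul_div_cancel₀ _ ha]
  refine ⟨aeval (Function.update X i (C (b / a) * X j)), ?_, fun f => ?_, fun m hm => ?_⟩
  · simp [hℓ, hij.symm]
  · rw [hℓ, Ideal.span_singleton_mul_left_unit ((Ne.isUnit ha).map C)]
    exact sub_aeval_update_X_mem_span i _ f
  · simp [hm]

theorem exists_algHom_map_linear_eq_zero {i j : σ} (hij : i ≠ j) {a b : K} (hab : a ≠ 0 ∨ b ≠ 0) :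
    ∃ τ : MvPolynomial σ K →ₐ[K] MvPolynomial σ K, τ (C a * X i - C b * X j) = 0 ∧
      (∀ f, f - τ f ∈ Ideal.span {C a * X i - C b * X j}) ∧
      ∀ m, m ≠ i → m ≠ j → τ (X m) = X m := by
  rcases hab with ha | hb
  · obtain ⟨τ, hτ, hsub, hX⟩ := exists_algHom_map_linear_eq_zero_of_ne_zero hij b ha
    exact ⟨τ, hτ, hsub, fun m hi _ => hX m hi⟩
  · obtain ⟨τ, hτ, hsub, hX⟩ := exists_algHom_map_linear_eq_zero_of_ne_zero hij.symm a hb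
    have hneg : C a * X i - C b * X j = -(C b * X j - C a * X i : MvPolynomial σ K) := by ring
    refine ⟨τ, by rw [hneg, map_neg, hτ, neg_zero], fun f => ?_, fun m _ hj => hX m hj⟩
    rw [hneg, Ideal.span_singleton_neg]
    exact hsub f

theorem prime_C_mul_X_sub_C_mul_X {i j : σ} (hij : i ≠ j) {a b : K} (hab : a ≠ 0 ∨ b ≠ 0) :
    Prime (C a * X i - C b * X j) := by
  obtain ⟨τ, hτ, hsub, -⟩ := exists_algHom_map_linear_eq_zero hij hab
  have hker : RingHom.ker τ = Ideal.span {C a * X i - C b * X j} := by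
    refine le_antisymm (fun f hf => ?_) ((Ideal.span_singleton_le_iff_mem _).2 hτ)
    simpa [RingHom.mem_ker.1 hf] using hsub f
  have hne : C a * X i - C b * X j ≠ (0 : MvPolynomial σ K) := by
    intro h
    have hi := congrArg (coeff (Finsupp.single i 1)) h
    have hj := congrArg (coeff (Finsupp.single j 1)) h
    simp [coeff_X, hij, hij.symm, Finsupp.single_eq_single_iff] at hi hj
    tauto
  rw [← Ideal.span_singleton_prime hne, ← hker]
  exact RingHom.ker_isPrime τ

end MvPolynomial

theorem Ideal.span_pair_pow_le {R : Type*} [CommSemiring R] (a b : R) (n : ℕ) :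
    Ideal.span {a, b} ^ n ≤ Ideal.span {a, b ^ n} := by
  induction n with
  | zero =>
    rw [pow_zero, pow_zero, Ideal.one_eq_top, top_le_iff, Ideal.eq_top_iff_one]
    exact Ideal.subset_span (by simp)
  | succ n ih =>
    rw [pow_succ, Ideal.mul_le]
    intro r hr s hs
    obtain ⟨u, v, rfl⟩ := Ideal.mem_span_pair.1 (ih hr)
    obtain ⟨u', v', rfl⟩ := Ideal.mem_span_pair.1 hs
    exact Ideal.mem_span_pair.2 ⟨(u * a + v * b ^ n) * u' + u * v' * b, v * v', by ring⟩

theorem Finset.prod_dvd_of_prime_dvd {ι M : Type*} [CommMonoidWithZero M]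
    {s : Finset ι} {p : ι → M} {n : M} (hp : ∀ i ∈ s, Prime (p i)) (hdvd : ∀ i ∈ s, p i ∣ n)
    (hinj : ∀ i ∈ s, ∀ j ∈ s, p i ∣ p j → i = j) : ∏ i ∈ s, p i ∣ n := by
  classical
  induction s using Finset.induction_on with
  | empty => simp
  | insert i s hi ih =>
    rw [Finset.prod_insert hi]
    obtain ⟨c, rfl⟩ := ih (fun j hj => hp j (mem_insert_of_mem hj))
      (fun j hj => hdvd j (mem_insert_of_mem hj))
      (fun j hj l hl => hinj j (mem_insert_of_mem hj) l (mem_insert_of_mem hl))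
    have hpi := hp i (mem_insert_self i s)
    have hnot : ¬ p i ∣ ∏ j ∈ s, p j := by
      rw [hpi.dvd_finsetProd_iff]
      rintro ⟨j, hj, hij⟩
      exact hi (hinj i (mem_insert_self i s) j (mem_insert_of_mem hj) hij ▸ hj)
    obtain ⟨d, rfl⟩ := (hpi.dvd_or_dvd (hdvd i (mem_insert_self i s))).resolve_left hnot
    exact ⟨d, by ac_rfl⟩

theorem Projectivization.eq_iff_det_eq_zero {K : Type*} [Field K]
    (u v : Projectivization K (Fin 2 → K)) :
    u = v ↔ u.rep 0 * v.rep 1 - u.rep 1 * v.rep 0 = 0 := by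
  rw [← dependent_pair_iff_eq, dependent_iff]
  have := Matrix.linearIndependent_rows_iff_isUnit (A := Matrix.of ![u.rep, v.rep])
  rw [Matrix.isUnit_iff_isUnit_det, Matrix.det_fin_two, isUnit_iff_ne_zero] at this
  convert this.not using 2
  · congr!
    ext i : 1
    fin_cases i <;> rfl
  · simp

section

variable {k}

theorem P1.rep_one_ne_zero_or_rep_zero_ne_zero (A : P1 k) : A.rep 1 ≠ 0 ∨ A.rep 0 ≠ 0 := by
  by_contra! h
  apply A.rep_nonzero
  funext i
  fin_cases i <;> simp [h]

theorem prime_lY (B : P1 k) : Prime (lY k B) :=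
  MvPolynomial.prime_C_mul_X_sub_C_mul_X (by decide) B.rep_one_ne_zero_or_rep_zero_ne_zero

theorem eq_of_lY_dvd_lY {B B' : P1 k} (h : lY k B ∣ lY k B') : B = B' := by
  obtain ⟨c, hc⟩ := h
  have hv := congrArg (eval ![0, 0, B.rep 0, B.rep 1]) hc
  simp only [lY, map_sub, map_mul, eval_C, eval_X, Matrix.cons_val] at hv
  rw [Projectivization.eq_iff_det_eq_zero]
  linear_combination hv

theorem lY_mem_span_X (B : P1 k) : lY k B ∈ Ideal.span {X 2, X 3} :=
  Ideal.mem_span_pair.2 ⟨C (B.rep 1), -C (B.rep 0), by rw [lY]; ring⟩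

theorem mem_span_of_mem_IX (Xs : Finset (P1 k × P1 k)) (A : P1 k) {f : MvPolynomial (Fin 4) k}
    (hf : f ∈ IX k Xs) : f ∈ Ideal.span {X 2, X 3 ^ alphaA k Xs A, lX k A} := by
  obtain ⟨τ, hτ, hsub, hX⟩ :=
    MvPolynomial.exists_algHom_map_linear_eq_zero (i := (0 : Fin 4)) (j := 1) (by decide)
      A.rep_one_ne_zero_or_rep_zero_ne_zero
  set T := Xs.filter (fun P => P.1 = A)
  have hτlY (B : P1 k) : τ (lY k B) = lY k B := by
    simp [lY, hX 2, hX 3]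
  have hdvd : ∀ P ∈ T, lY k P.2 ∣ τ f := by
    intro P hP
    obtain ⟨hPX, hPA⟩ := Finset.mem_filter.1 hP
    have hfP : f ∈ pointIdeal k P := Ideal.mem_iInf.1 (Ideal.mem_iInf.1 hf P) hPX
    obtain ⟨u, v, huv⟩ := Ideal.mem_span_pair.1 hfP
    rw [hPA] at huv
    refine ⟨τ v, ?_⟩
    rw [← huv, map_add, map_mul, map_mul, show τ (lX k A) = 0 from hτ, hτlY, mul_zero, zero_add,
      mul_comm]
  have hprod : ∏ P ∈ T, lY k P.2 ∣ τ f :=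
    Finset.prod_dvd_of_prime_dvd (fun P _ => prime_lY P.2) hdvd
      (fun P hP Q hQ h =>
        Prod.ext ((Finset.mem_filter.1 hP).2.trans (Finset.mem_filter.1 hQ).2.symm)
          (eq_of_lY_dvd_lY h))
  have hτf : τ f ∈ Ideal.span {X 2, X 3 ^ alphaA k Xs A} := by
    refine Ideal.mem_of_dvd _ hprod (Ideal.span_pair_pow_le _ _ _ ?_)
    have hmem := Ideal.prod_mem_prod (s := T) (I := fun _ => Ideal.span {X 2, X 3})
      (fun P _ => lY_mem_span_X P.2)
    rwa [Finset.prod_const] at hmem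
  have hlX : f - τ f ∈ Ideal.span {X 2, X 3 ^ alphaA k Xs A, lX k A} :=
    Ideal.span_mono (by simp [lX]) (hsub f)
  have hτf' : τ f ∈ Ideal.span {X 2, X 3 ^ alphaA k Xs A, lX k A} :=
    Ideal.span_mono (by simp [Set.insert_subset_iff]) hτf
  simpa using Ideal.add_mem _ hlX hτf'

end

theorem stmt13 (Xs : Finset (P1 k × P1 k)) (a : ℕ) :
    (IX k Xs ⊓ (Mx k) ^ a) ⊔ Ideal.span {X 2} ≤
      (⨅ A ∈ pi1 k Xs, Ideal.span {X 2, X 3 ^ (alphaA k Xs A), lX k A}) ⊓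
        ((Mx k) ^ a ⊔ Ideal.span {X 2}) := by
  refine sup_le (le_inf ?_ (inf_le_right.trans le_sup_left)) (le_inf ?_ le_sup_right)
  · exact le_iInf₂ fun A _ f hf => mem_span_of_mem_IX Xs A (Ideal.mem_inf.1 hf).1
  · exact le_iInf₂ fun A _ => Ideal.span_mono (by simp)

end
end

section
/- Let A = [a₀:a₁] ∈ ℙ¹ and let B₁ = [b_{1,0}:b_{1,1}], …, B_α = [b_{α,0}:b_{α,1}] be α ≥ 1 distinct points of ℙ¹ with b_{i,0} ≠ 0 for all i (i.e., no B_i equals [0:1]), over a field k, and let X = {A×B₁, …, A×B_α} ⊆ ℙ¹ × ℙ¹. Then ⟨I_X, y₀⟩ = ⟨y₀, y₁^{α}, L_A⟩, where L_A = a₁x₀ − a₀x₁. -/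
open MvPolynomial
open scoped Classical

noncomputable section

variable (k : Type) [Field k]

/-! The ideal `I_{A×B} = ⟨L_A, ℓ_B⟩` of a point is prime, being the kernel of the
parametrization `(s, t) ↦ (a₀s, a₁s, b₀t, b₁t)`, and contains `ℓ_{B'}` only for `B' = B`.
Peeling off one point at a time, primality gives `I_X = ⋂ᵢ ⟨L_A, ℓ_{Bᵢ}⟩ = ⟨L_A, ∏ᵢ ℓ_{Bᵢ}⟩`.
Modulo `y₀` we have `∏ᵢ ℓ_{Bᵢ} ≡ ∏ᵢ (-b_{i,0}) · y₁^α`, and the constant is a unit because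
no `Bᵢ` is `[0:1]`. -/

section

variable {k}

lemma MvPolynomial.sub_algHom_mem_of_forall_X {σ R : Type*} [CommRing R]
    {I : Ideal (MvPolynomial σ R)} (φ : MvPolynomial σ R →ₐ[R] MvPolynomial σ R)
    (h : ∀ n, X n - φ (X n) ∈ I) (f : MvPolynomial σ R) : f - φ f ∈ I := by
  have hφ : (Ideal.Quotient.mkₐ R I).comp φ = Ideal.Quotient.mkₐ R I :=
    algHom_ext fun n => (Ideal.Quotient.eq.mpr (h n)).symm
  exact Ideal.Quotient.eq.mp (DFunLike.congr_fun hφ f).symm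

lemma Ideal.span_pair_inf_le_span_pair_mul {R : Type*} [CommRing R] {L p q : R}
    (hp : (span {L, p}).IsPrime) (hq : q ∉ span {L, p}) :
    span {L, p} ⊓ span {L, q} ≤ span {L, p * q} := by
  intro f ⟨hfp, hfq⟩
  obtain ⟨g, h, rfl⟩ := mem_span_pair.mp hfq
  have hhq : h * q ∈ span {L, p} := by
    simpa using sub_mem hfp (mul_mem_left _ g (subset_span (Set.mem_insert L _)))
  obtain ⟨g', h', rfl⟩ := mem_span_pair.mp ((hp.mem_or_mem hhq).resolve_right hq)
  exact mem_span_pair.mpr ⟨g + g' * q, h', by ring⟩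

lemma Ideal.iInf_span_pair_eq_span_pair_prod {R ι : Type*} [CommRing R] [DecidableEq ι]
    {L : R} {P : ι → R} {s : Finset ι} (hprime : ∀ i ∈ s, (span {L, P i}).IsPrime)
    (hP : ∀ i ∈ s, ∀ j ∈ s, j ≠ i → P j ∉ span {L, P i}) :
    ⨅ i ∈ s, span {L, P i} = span {L, ∏ i ∈ s, P i} := by
  refine le_antisymm ?_ (le_iInf₂ fun i hi => span_le.mpr ?_)
  · induction s using Finset.induction_on with
    | empty =>
      simpa using
        eq_top_of_isUnit_mem (span {L, 1}) (subset_span (Set.mem_insert_of_mem L rfl)) isUnit_one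
    | insert a s ha ih =>
      have hprod : ∏ i ∈ s, P i ∉ span {L, P a} := fun hmem => by
        have := hprime a (s.mem_insert_self a)
        obtain ⟨j, hj, hPj⟩ := IsPrime.prod_mem_iff.mp hmem
        exact hP a (s.mem_insert_self a) j (s.mem_insert_of_mem hj)
          (by rintro rfl; exact ha hj) hPj
      rw [Finset.iInf_insert, Finset.prod_insert ha]
      refine le_trans (inf_le_inf_left _ (ih (fun i hi => hprime i (s.mem_insert_of_mem hi))
        fun i hi j hj => hP i (s.mem_insert_of_mem hi) j (s.mem_insert_of_mem hj))) ?_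
      exact span_pair_inf_le_span_pair_mul (hprime a (s.mem_insert_self a)) hprod
  · rintro f (rfl | rfl)
    · exact subset_span (Set.mem_insert _ _)
    · exact mem_of_dvd _ (Finset.dvd_prod_of_mem P hi)
        (subset_span (Set.mem_insert_of_mem _ rfl))

lemma Projectivization.exists_mul_rep_add_mul_rep_eq_one (A : P1 k) :
    ∃ c₀ c₁ : k, c₀ * A.rep 0 + c₁ * A.rep 1 = 1 := by
  by_cases h₀ : A.rep 0 = 0
  · have h₁ : A.rep 1 ≠ 0 := fun h₁ =>
      A.rep_nonzero (funext fun i => by fin_cases i <;> assumption)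
    exact ⟨0, (A.rep 1)⁻¹, by field_simp; ring⟩
  · exact ⟨(A.rep 0)⁻¹, 0, by field_simp; ring⟩

/-- The parametrization `(s, t) ↦ (a₀s, a₁s, b₀t, b₁t)` of the point `[a₀:a₁] × [b₀:b₁]`. -/
def pointParam (P : P1 k × P1 k) : MvPolynomial (Fin 4) k →ₐ[k] MvPolynomial (Fin 2) k :=
  aeval ![C (P.1.rep 0) * X 0, C (P.1.rep 1) * X 0, C (P.2.rep 0) * X 1, C (P.2.rep 1) * X 1]

lemma pointParam_lX (P : P1 k × P1 k) (A : P1 k) :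
    pointParam P (lX k A) = C (A.rep 1 * P.1.rep 0 - A.rep 0 * P.1.rep 1) * X 0 := by
  simp [pointParam, lX]
  ring

lemma pointParam_lY (P : P1 k × P1 k) (B : P1 k) :
    pointParam P (lY k B) = C (B.rep 1 * P.2.rep 0 - B.rep 0 * P.2.rep 1) * X 1 := by
  simp [pointParam, lY]
  ring

lemma pointIdeal_eq_ker (P : P1 k × P1 k) : pointIdeal k P = RingHom.ker (pointParam P) := by
  refine le_antisymm (Ideal.span_le.mpr ?_) fun f hf => ?_
  · rintro f (rfl | rfl) <;> simp [pointParam_lX, pointParam_lY, mul_comm]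
  -- `lift` is a section of `pointParam P`, and `lift ∘ pointParam P` fixes every variable
  -- modulo `pointIdeal k P`, hence fixes every polynomial modulo it.
  obtain ⟨c₀, c₁, hc⟩ := P.1.exists_mul_rep_add_mul_rep_eq_one
  obtain ⟨d₀, d₁, hd⟩ := P.2.exists_mul_rep_add_mul_rep_eq_one
  let lift : MvPolynomial (Fin 2) k →ₐ[k] MvPolynomial (Fin 4) k :=
    aeval ![C c₀ * X 0 + C c₁ * X 1, C d₀ * X 2 + C d₁ * X 3]
  have hc' : C c₀ * C (P.1.rep 0) + C c₁ * C (P.1.rep 1) = (1 : MvPolynomial (Fin 4) k) := by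
    simpa using congrArg C hc
  have hd' : C d₀ * C (P.2.rep 0) + C d₁ * C (P.2.rep 1) = (1 : MvPolynomial (Fin 4) k) := by
    simpa using congrArg C hd
  have hfix := sub_algHom_mem_of_forall_X (I := pointIdeal k P) (lift.comp (pointParam P))
    (fun n => Ideal.mem_span_pair.mpr ?_) f
  · rwa [AlgHom.comp_apply, RingHom.mem_ker.mp hf, map_zero, sub_zero] at hfix
  fin_cases n
  · exact ⟨C c₁, 0, by simp [lift, pointParam, lX]; linear_combination X 0 * hc'⟩
  · exact ⟨-C c₀, 0, by simp [lift, pointParam, lX]; linear_combination X 1 * hc'⟩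
  · exact ⟨0, C d₁, by simp [lift, pointParam, lY]; linear_combination X 2 * hd'⟩
  · exact ⟨0, -C d₀, by simp [lift, pointParam, lY]; linear_combination X 3 * hd'⟩

lemma pointIdeal_isPrime (P : P1 k × P1 k) : (pointIdeal k P).IsPrime :=
  pointIdeal_eq_ker P ▸ RingHom.ker_isPrime _

lemma Projectivization.eq_of_rep_mul_sub_rep_mul_eq_zero {A B : P1 k}
    (h : A.rep 1 * B.rep 0 - A.rep 0 * B.rep 1 = 0) : A = B := by
  rw [← A.mk_rep, ← B.mk_rep, mk_eq_mk_iff' _ _ _ A.rep_nonzero B.rep_nonzero]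
  by_cases h₀ : B.rep 0 = 0
  · have h₁ : B.rep 1 ≠ 0 := fun h₁ =>
      B.rep_nonzero (funext fun i => by fin_cases i <;> assumption)
    refine ⟨A.rep 1 / B.rep 1, funext fun i => ?_⟩
    fin_cases i <;> simp <;> field_simp
    linear_combination h
  · refine ⟨A.rep 0 / B.rep 0, funext fun i => ?_⟩
    fin_cases i <;> simp <;> field_simp
    linear_combination -h

lemma lY_notMem_pointIdeal {P : P1 k × P1 k} {B : P1 k} (h : B ≠ P.2) :
    lY k B ∉ pointIdeal k P := by
  rw [pointIdeal_eq_ker, RingHom.mem_ker, pointParam_lY]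
  refine mul_ne_zero (fun hC => h ?_) (X_ne_zero 1)
  exact Projectivization.eq_of_rep_mul_sub_rep_mul_eq_zero (C_eq_zero.mp hC)

lemma rep_zero_ne_zero_of_ne_pt01 {B : P1 k} (h : B ≠ pt01 k) : B.rep 0 ≠ 0 := by
  refine fun h₀ => h ?_
  rw [← B.mk_rep, pt01, Projectivization.mk_eq_mk_iff']
  refine ⟨B.rep 1, funext fun i => ?_⟩
  fin_cases i
  · simp [h₀]
  · simp

lemma IX_image_eq_span_pair_prod {ι : Type*} [Fintype ι] (A : P1 k) {B : ι → P1 k}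
    (hB : Function.Injective B) :
    IX k (Finset.univ.image fun i => (A, B i)) = Ideal.span {lX k A, ∏ i, lY k (B i)} := by
  rw [IX, Finset.iInf_finset_image]
  unfold pointIdeal
  exact Ideal.iInf_span_pair_eq_span_pair_prod (L := lX k A) (P := fun i => lY k (B i))
    (fun i _ => pointIdeal_isPrime (A, B i))
    fun i _ j _ hji => lY_notMem_pointIdeal (P := (A, B i)) fun h => hji (hB h)

lemma prod_lY_sub_mem_span_X2 {ι : Type*} (s : Finset ι) (B : ι → P1 k) :
    ∏ i ∈ s, lY k (B i) - C (∏ i ∈ s, -(B i).rep 0) * X 3 ^ s.card ∈ Ideal.span {X 2} := by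
  rw [← Ideal.Quotient.eq]
  have hX2 : Ideal.Quotient.mk (Ideal.span {X 2}) (X 2 : MvPolynomial (Fin 4) k) = 0 :=
    Ideal.Quotient.eq_zero_iff_mem.mpr (Ideal.mem_span_singleton_self _)
  simp only [lY, map_sub, map_mul, map_neg, map_prod, map_pow, hX2, mul_zero, zero_sub]
  rw [← Finset.prod_const, ← Finset.prod_mul_distrib]
  exact Finset.prod_congr rfl fun _ _ => by ring

lemma Ideal.span_pair_sup_span_singleton_eq {R : Type*} [CommRing R] {L Q x y u : R}
    (hu : IsUnit u) (hQ : Q - u * y ∈ span {x}) :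
    span {L, Q} ⊔ span {x} = span {x, y, L} := by
  obtain ⟨u, rfl⟩ := hu
  have hy : y = ↑u⁻¹ * (Q - (Q - u * y)) := by simp
  refine le_antisymm (sup_le ?_ ?_) ?_ <;>
    simp only [span_le, Set.insert_subset_iff, Set.singleton_subset_iff, SetLike.mem_coe]
  · refine ⟨subset_span (by simp), ?_⟩
    rw [← sub_add_cancel Q (u * y)]
    exact add_mem (span_mono (by simp) hQ) (mul_mem_left _ _ (subset_span (by simp)))
  · exact subset_span (by simp)
  · refine ⟨mem_sup_right (mem_span_singleton_self x), ?_, mem_sup_left (subset_span (by simp))⟩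
    rw [hy]
    exact mul_mem_left _ _ (sub_mem (mem_sup_left (subset_span (by simp))) (mem_sup_right hQ))

end

theorem stmt14 (A : P1 k) (α : ℕ) (B : Fin α → P1 k)
    (hB : Function.Injective B) (h01 : ∀ i, B i ≠ pt01 k) :
    IX k (Finset.univ.image (fun i => (A, B i))) ⊔ Ideal.span {X 2} =
      Ideal.span {X 2, X 3 ^ α, lX k A} := by
  rw [IX_image_eq_span_pair_prod A hB]
  have hc : IsUnit (C (∏ i, -(B i).rep 0) : MvPolynomial (Fin 4) k) :=
    (Finset.prod_ne_zero_iff.mpr fun i _ =>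
      neg_ne_zero.mpr (rep_zero_ne_zero_of_ne_pt01 (h01 i))).isUnit.map C
  exact Ideal.span_pair_sup_span_singleton_eq hc (by
    simpa using prod_lY_sub_mem_span_X2 Finset.univ B)

end
end

section
/- Let k be a field, let α ≥ 1 be an integer, and let (a₀,a₁) ∈ k² be a nonzero vector. Then the ideal ⟨y₀, y₁^{α}, a₁x₀ − a₀x₁⟩ of S = k[x₀,x₁,y₀,y₁] is a primary ideal. -/
/-!
Choose `u, v` with `a₁ u - a₀ v = 1` and let `ψ` be the `k`-algebra endomorphism
`x₀ ↦ x₀ - u ℓ, x₁ ↦ x₁ - v ℓ, y₀ ↦ 0, y₁ ↦ y₁`, where `ℓ = a₁x₀ − a₀x₁`. It kills `J = ⟨y₀, ℓ⟩`,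
is the identity modulo `J`, and fixes `y₁`; hence the ideal `J + ⟨y₁^α⟩` is the preimage of
`⟨y₁^α⟩` under `ψ`, and the preimage of a primary ideal is primary.
-/

open MvPolynomial

namespace Ideal

theorem isPrimary_span_singleton_pow {R : Type*} [CommRing R] [IsDomain R] {p : R}
    (hp : Prime p) {n : ℕ} (hn : n ≠ 0) : (span {p ^ n} : Ideal R).IsPrimary := by
  rw [isPrimary_iff]
  refine ⟨?_, fun {a b} hab => ?_⟩
  · rw [ne_eq, span_singleton_eq_top, isUnit_pow_iff hn]
    exact hp.not_isUnit
  · rw [mem_span_singleton] at hab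
    by_cases hb : p ∣ b
    · exact Or.inr ⟨n, mem_span_singleton.2 (pow_dvd_pow_of_dvd hb n)⟩
    · exact Or.inl (mem_span_singleton.2 (hp.pow_dvd_of_dvd_mul_right n hb hab))

theorem comap_eq_sup_of_forall_sub_mem {R F : Type*} [CommRing R] [FunLike F R R]
    [RingHomClass F R R] {ψ : F} {J Q : Ideal R} (hJ : J ≤ RingHom.ker ψ)
    (hsub : ∀ f, f - ψ f ∈ J) (hQ : Q.map ψ ≤ Q) : Q.comap ψ = J ⊔ Q := by
  refine le_antisymm (fun f hf => ?_) (sup_le (fun f hf => ?_) (map_le_iff_le_comap.1 hQ))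
  · rw [← sub_add_cancel f (ψ f)]
    exact Submodule.add_mem_sup (hsub f) hf
  · rw [mem_comap, RingHom.mem_ker.1 (hJ hf)]
    exact zero_mem Q

end Ideal

namespace MvPolynomial

theorem sub_mem_of_forall_X_sub_mem {σ R : Type*} [CommRing R] {J : Ideal (MvPolynomial σ R)}
    {ψ : MvPolynomial σ R →ₐ[R] MvPolynomial σ R} (h : ∀ i, X i - ψ (X i) ∈ J)
    (f : MvPolynomial σ R) : f - ψ f ∈ J := by
  have hψ : (Ideal.Quotient.mkₐ R J).comp ψ = Ideal.Quotient.mkₐ R J :=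
    algHom_ext fun i => (Ideal.Quotient.eq.2 (h i)).symm
  exact Ideal.Quotient.eq.1 (AlgHom.congr_fun hψ f).symm

end MvPolynomial

theorem exists_mul_sub_mul_eq_one {k : Type*} [Field k] {a₀ a₁ : k} (h : (a₀, a₁) ≠ (0, 0)) :
    ∃ u v : k, a₁ * u - a₀ * v = 1 := by
  by_cases h₁ : a₁ = 0
  · have h₀ : a₀ ≠ 0 := fun h₀ => h (by rw [h₀, h₁])
    exact ⟨0, -a₀⁻¹, by field_simp; ring⟩
  · exact ⟨a₁⁻¹, 0, by field_simp; ring⟩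

theorem stmt15_general (k : Type) [Field k] (α : ℕ) (hα : 1 ≤ α)
    (a₀ a₁ : k) (h : (a₀, a₁) ≠ (0, 0)) :
    (Ideal.span {X 2, X 3 ^ α, C a₁ * X 0 - C a₀ * X 1} :
      Ideal (MvPolynomial (Fin 4) k)).IsPrimary := by
  obtain ⟨u, v, huv⟩ := exists_mul_sub_mul_eq_one h
  set ℓ : MvPolynomial (Fin 4) k := C a₁ * X 0 - C a₀ * X 1
  set J : Ideal (MvPolynomial (Fin 4) k) := Ideal.span {X 2, ℓ}
  let ψ : MvPolynomial (Fin 4) k →ₐ[k] MvPolynomial (Fin 4) k :=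
    aeval ![X 0 - C u * ℓ, X 1 - C v * ℓ, 0, X 3]
  have hψℓ : ψ ℓ = 0 := by
    have : ψ ℓ = ℓ - C (a₁ * u - a₀ * v) * ℓ := by simp [ψ, ℓ, algebraMap_eq]; ring
    rw [this, huv, C_1, one_mul, sub_self]
  have hker : J ≤ RingHom.ker ψ := by
    rw [Ideal.span_le, Set.insert_subset_iff, Set.singleton_subset_iff]
    exact ⟨by simp [ψ], hψℓ⟩
  have hsub : ∀ f, f - ψ f ∈ J := by
    refine sub_mem_of_forall_X_sub_mem fun i => ?_
    have hX₂ : X 2 ∈ J := Ideal.subset_span (by simp)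
    have hℓ : ℓ ∈ J := Ideal.subset_span (by simp)
    fin_cases i <;> simp [ψ, hX₂, J.mul_mem_left _ hℓ]
  have hQ : (Ideal.span {X 3 ^ α}).map ψ ≤ Ideal.span {X 3 ^ α} := by
    simp [Ideal.map_span, ψ]
  have hI : Ideal.span {X 2, X 3 ^ α, ℓ} = J ⊔ Ideal.span {X 3 ^ α} := by
    rw [← Ideal.span_union, Set.insert_union, Set.singleton_union, Set.pair_comm ℓ]
  rw [hI, ← Ideal.comap_eq_sup_of_forall_sub_mem hker hsub hQ]
  exact (Ideal.isPrimary_span_singleton_pow X_prime (by omega)).comap _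

/-- for a field `k`, an integer `α ≥ 1` and a nonzero vector `(a₀,a₁) ∈ k²`,
the ideal `⟨y₀, y₁^α, a₁x₀ − a₀x₁⟩` of `S = k[x₀,x₁,y₀,y₁]` is primary.
Here `x₀,x₁,y₀,y₁` are `X 0, X 1, X 2, X 3`. -/
theorem stmt15 (k : Type) [Field k] [CharZero k] (α : ℕ) (hα : 1 ≤ α)
    (a₀ a₁ : k) (h : (a₀, a₁) ≠ (0, 0)) :
    (Ideal.span {X 2, X 3 ^ α, C a₁ * X 0 - C a₀ * X 1} :
      Ideal (MvPolynomial (Fin 4) k)).IsPrimary :=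
  stmt15_general k α hα a₀ a₁ h
end
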